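/- arXiv:1711.06201 — 8 statements merged into one kernel-verified Lean document; each statement's English description precedes it below -/
import Mathlib

section
/- Fix an integer p ≥ 0 and let L_G be the Glauber generator on Ω*_p with rate functions c_k, k ∈ Λ*_p, expanded as c_k = Σ_{A⊆Λ*_p} R_{k,A} Ψ_A. Then the functions L_G Ψ_{{j}} are polynomials of order 1 for every j ∈ Λ*_p and the functions L_G Ψ_{{j,k}} are polynomials of order 2 for every pair j ≠ k in Λ*_p, if and only if for every j ∈ Λ*_p and every η ∈ Ω*_p one has c_j(η) = R_{j,∅} + R_{j,{j}} η_j + Σ_{k≠j} R_{j,{k}} η_k (1 − 2η_j). -/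
open Finset

/-- Occupation value of a site. -/
def occ (b : Bool) : ℝ := if b then 1 else 0

/-- Flip the occupation variable at site `i`. -/
def flipCfg {m : ℕ} (η : Fin m → Bool) (i : Fin m) : Fin m → Bool :=
  Function.update η i (!(η i))

/-- `Ψ_A(η) = ∏_{k ∈ A} η_k`.  The sites of `Λ*_p = {-p, …, 0}` are indexed by
`Fin (p+1)`, index `i` corresponding to site `i - p`. -/
def Psi {m : ℕ} (A : Finset (Fin m)) (η : Fin m → Bool) : ℝ := ∏ k ∈ A, occ (η k)

/-- `f` is a polynomial of order `n`: a linear combination of `Ψ_A` with `|A| ≤ n`. -/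
def IsPolyOfOrder {m : ℕ} (n : ℕ) (f : (Fin m → Bool) → ℝ) : Prop :=
  f ∈ Submodule.span ℝ {g : (Fin m → Bool) → ℝ |
    ∃ A : Finset (Fin m), A.card ≤ n ∧ g = Psi A}

/-- The rate `c_k` expanded in the basis `Ψ_A` with coefficients `R k A`:
`c_k = Σ_{A ⊆ Λ*_p} R_{k,A} Ψ_A`. -/
def rateFromCoeff {m : ℕ} (R : Fin m → Finset (Fin m) → ℝ) (k : Fin m)
    (η : Fin m → Bool) : ℝ :=
  ∑ A : Finset (Fin m), R k A * Psi A η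

/-- The Glauber generator with rate functions `c_k`. -/
def glauberGen {m : ℕ} (c : Fin m → (Fin m → Bool) → ℝ)
    (f : (Fin m → Bool) → ℝ) (η : Fin m → Bool) : ℝ :=
  ∑ k : Fin m, c k η * (f (flipCfg η k) - f η)

/-!
Flipping a site `k ∈ A` changes `Ψ_A` by `(1 - 2η_k) Ψ_{A∖k}`, so
`L_G Ψ_{j} = c_j (1 - 2η_j)` and `L_G Ψ_{j,k} = (L_G Ψ_{j}) η_k + (L_G Ψ_{k}) η_j`.
As `(1 - 2η_j)² = 1`, the claimed form of `c_j` says exactly that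
`L_G Ψ_{j} = R_{j,∅} - (2R_{j,∅} + R_{j,{j}}) η_j + Σ_{k≠j} R_{j,{k}} η_k`.
A polynomial of order one is the affine interpolation of its values at the empty and the
one-particle configurations, where `c_j` takes the values `R_{j,∅}` and `R_{j,∅} + R_{j,{k}}`;
this gives one direction. Conversely, multiplying by `η_k` raises the order by at most one.
-/

lemma Finset.sum_powerset_singleton {α β : Type*} [DecidableEq α] [AddCommMonoid β] (a : α)
    (f : Finset α → β) : ∑ t ∈ ({a} : Finset α).powerset, f t = f ∅ + f {a} := by
  rw [← insert_empty, sum_powerset_insert (notMem_empty a)]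
  simp

lemma occ_not (b : Bool) : occ (!b) = 1 - occ b := by cases b <;> simp [occ]

lemma occ_mul_self (b : Bool) : occ b * occ b = occ b := by cases b <;> simp [occ]

lemma mul_one_sub_two_occ_eq_iff {x y : ℝ} (b : Bool) :
    x * (1 - 2 * occ b) = y ↔ x = y * (1 - 2 * occ b) := by
  cases b <;> norm_num [occ]; constructor <;> intro h <;> linarith

lemma affine_mul_one_sub_two_occ {m : ℕ} (a b : ℝ) (d : Fin m → ℝ) (j : Fin m)
    (η : Fin m → Bool) :
    (a + (-2 * a - b) * occ (η j) + ∑ k ∈ univ.erase j, d k * occ (η k)) * (1 - 2 * occ (η j))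
      = a + b * occ (η j) + ∑ k ∈ univ.erase j, d k * occ (η k) * (1 - 2 * occ (η j)) := by
  rw [add_mul, sum_mul]
  linear_combination (4 * a + 2 * b) * occ_mul_self (η j)

section Psi

variable {m : ℕ}

lemma Psi_singleton (k : Fin m) (η : Fin m → Bool) : Psi {k} η = occ (η k) := by
  simp [Psi]

lemma Psi_mul_occ (A : Finset (Fin m)) (k : Fin m) (η : Fin m → Bool) :
    Psi A η * occ (η k) = Psi (insert k A) η := by
  by_cases hk : k ∈ A
  · rw [insert_eq_self.2 hk, Psi, ← mul_prod_erase A _ hk,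
      mul_comm, ← mul_assoc, occ_mul_self]
  · rw [Psi, Psi, prod_insert hk, mul_comm]

def configOf (B : Finset (Fin m)) : Fin m → Bool := fun i => decide (i ∈ B)

lemma occ_configOf (B : Finset (Fin m)) (i : Fin m) :
    occ (configOf B i) = if i ∈ B then 1 else 0 := by
  simp [configOf, occ]

lemma Psi_configOf (A B : Finset (Fin m)) :
    Psi A (configOf B) = if A ⊆ B then 1 else 0 := by
  simp [Psi, configOf, occ, prod_boole, subset_iff]

lemma rateFromCoeff_configOf (R : Fin m → Finset (Fin m) → ℝ) (j : Fin m)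
    (B : Finset (Fin m)) :
    rateFromCoeff R j (configOf B) = ∑ A ∈ B.powerset, R j A := by
  simp only [rateFromCoeff, Psi_configOf, mul_ite, mul_one, mul_zero, sum_ite,
    sum_const_zero, add_zero]
  congr 1
  ext A
  simp

lemma Psi_flipCfg_of_notMem {A : Finset (Fin m)} {i : Fin m} (hi : i ∉ A)
    (η : Fin m → Bool) : Psi A (flipCfg η i) = Psi A η :=
  prod_congr rfl fun _ hk =>
    congrArg occ (Function.update_of_ne (ne_of_mem_of_not_mem hk hi) _ _)

lemma Psi_flipCfg_sub_Psi {A : Finset (Fin m)} {k : Fin m} (hk : k ∈ A)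
    (η : Fin m → Bool) :
    Psi A (flipCfg η k) - Psi A η = (1 - 2 * occ (η k)) * Psi (A.erase k) η := by
  have hflip : flipCfg η k k = !η k := Function.update_self _ _ _
  rw [Psi, Psi, ← mul_prod_erase A _ hk, ← mul_prod_erase A _ hk, hflip,
    ← Psi, ← Psi, Psi_flipCfg_of_notMem (notMem_erase k A), occ_not]
  ring

end Psi

section Glauber

variable {m : ℕ} (c : Fin m → (Fin m → Bool) → ℝ)

lemma glauberGen_Psi (A : Finset (Fin m)) (η : Fin m → Bool) :
    glauberGen c (Psi A) η
      = ∑ k ∈ A, c k η * ((1 - 2 * occ (η k)) * Psi (A.erase k) η) := by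
  rw [glauberGen, ← sum_subset (subset_univ A) fun k _ hk => by
    rw [Psi_flipCfg_of_notMem hk, sub_self, mul_zero]]
  exact sum_congr rfl fun k hk => by rw [Psi_flipCfg_sub_Psi hk]

lemma glauberGen_Psi_singleton (j : Fin m) (η : Fin m → Bool) :
    glauberGen c (Psi {j}) η = c j η * (1 - 2 * occ (η j)) := by
  simp [glauberGen_Psi, Psi]

lemma glauberGen_Psi_pair {j k : Fin m} (hjk : j ≠ k) (η : Fin m → Bool) :
    glauberGen c (Psi {j, k}) η
      = glauberGen c (Psi {j}) η * occ (η k) + glauberGen c (Psi {k}) η * occ (η j) := by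
  rw [glauberGen_Psi, sum_pair hjk, glauberGen_Psi_singleton,
    glauberGen_Psi_singleton, erase_insert (notMem_singleton.2 hjk),
    pair_comm, erase_insert (notMem_singleton.2 hjk.symm),
    Psi_singleton, Psi_singleton]
  ring

end Glauber

section Polynomial

variable {m : ℕ}

lemma isPolyOfOrder_Psi {n : ℕ} {A : Finset (Fin m)} (hA : A.card ≤ n) :
    IsPolyOfOrder n (Psi A) :=
  Submodule.subset_span ⟨A, hA, rfl⟩

lemma IsPolyOfOrder.mul_occ {n : ℕ} {f : (Fin m → Bool) → ℝ} (hf : IsPolyOfOrder n f)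
    (k : Fin m) : IsPolyOfOrder (n + 1) (fun η => f η * occ (η k)) := by
  refine (Submodule.span_le (p := (Submodule.span ℝ _).comap
    (LinearMap.mulRight ℝ (fun η : Fin m → Bool => occ (η k))))).2 ?_ hf
  rintro _ ⟨A, hA, rfl⟩
  have hmul : Psi A * (fun η => occ (η k)) = Psi (insert k A) := funext (Psi_mul_occ A k)
  simp only [SetLike.mem_coe, Submodule.mem_comap, LinearMap.mulRight_apply, hmul]
  exact isPolyOfOrder_Psi ((card_insert_le k A).trans (by omega))

lemma isPolyOfOrder_one_affine (a b : ℝ) (d : Fin m → ℝ) (j : Fin m) :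
    IsPolyOfOrder 1 (fun η => a + b * occ (η j) + ∑ k ∈ univ.erase j, d k * occ (η k)) := by
  have hsum : (fun η => a + b * occ (η j) + ∑ k ∈ univ.erase j, d k * occ (η k))
      = a • Psi ∅ + b • Psi {j} + ∑ k ∈ univ.erase j, d k • Psi {k} := by
    funext η
    simp [Psi]
  rw [hsum]
  refine add_mem (add_mem ?_ ?_) (sum_mem fun k _ => ?_) <;>
    exact Submodule.smul_mem _ _ (isPolyOfOrder_Psi (by simp))

lemma IsPolyOfOrder.apply_eq_affine_of_one {f : (Fin m → Bool) → ℝ} (hf : IsPolyOfOrder 1 f)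
    (η : Fin m → Bool) :
    f η = f (configOf ∅) + ∑ k, (f (configOf {k}) - f (configOf ∅)) * occ (η k) := by
  induction hf using Submodule.span_induction generalizing η with
  | mem g hg =>
    obtain ⟨A, hA, rfl⟩ := hg
    rcases Nat.le_one_iff_eq_zero_or_eq_one.1 hA with h | h
    · rw [card_eq_zero.1 h]
      simp [Psi]
    · obtain ⟨l, rfl⟩ := card_eq_one.1 h
      simp [Psi_configOf, Psi_singleton, ite_mul]
  | zero => simp
  | add x y _ _ hx hy =>
    simp only [Pi.add_apply, hx η, hy η, add_sub_add_comm, add_mul, sum_add_distrib]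
    ring
  | smul a x _ hx =>
    simp only [Pi.smul_apply, smul_eq_mul, hx η, ← mul_sub, mul_assoc, ← mul_sum]
    ring

end Polynomial

lemma glauberGen_Psi_singleton_eq_of_isPolyOfOrder_one {m : ℕ}
    (R : Fin m → Finset (Fin m) → ℝ) (j : Fin m)
    (h : IsPolyOfOrder 1 (glauberGen (rateFromCoeff R) (Psi {j}))) (η : Fin m → Bool) :
    glauberGen (rateFromCoeff R) (Psi {j}) η
      = R j ∅ + (-2 * R j ∅ - R j {j}) * occ (η j)
        + ∑ k ∈ univ.erase j, R j {k} * occ (η k) := by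
  have hvalue (B : Finset (Fin m)) : glauberGen (rateFromCoeff R) (Psi {j}) (configOf B)
      = (∑ A ∈ B.powerset, R j A) * (1 - 2 * if j ∈ B then 1 else 0) := by
    rw [glauberGen_Psi_singleton, rateFromCoeff_configOf, occ_configOf]
  rw [h.apply_eq_affine_of_one, ← add_sum_erase _ _ (mem_univ j)]
  simp only [hvalue, powerset_empty, sum_powerset_singleton, sum_singleton]
  rw [sum_congr rfl fun k hk => by
    rw [if_neg (notMem_singleton.2 (ne_of_mem_erase hk).symm)]]
  simp only [notMem_empty, mem_singleton, if_false, if_true, mul_zero, sub_zero,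
    mul_one, add_sub_cancel_left]
  ring

/-- `L_G Ψ_{{j}}` has order `1` and `L_G Ψ_{{j,k}}` has order `2`
(for all `j ≠ k`) iff
`c_j(η) = R_{j,∅} + R_{j,{j}} η_j + Σ_{k ≠ j} R_{j,{k}} η_k (1 − 2η_j)`. -/
theorem stmt0 (p : ℕ) (R : Fin (p+1) → Finset (Fin (p+1)) → ℝ) :
    ((∀ j : Fin (p+1),
        IsPolyOfOrder 1 (glauberGen (rateFromCoeff R) (Psi {j}))) ∧
     (∀ j k : Fin (p+1), j ≠ k →
        IsPolyOfOrder 2 (glauberGen (rateFromCoeff R) (Psi {j, k})))) ↔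
    (∀ (j : Fin (p+1)) (η : Fin (p+1) → Bool),
      rateFromCoeff R j η
        = R j ∅ + R j {j} * occ (η j)
          + ∑ k ∈ Finset.univ.erase j, R j {k} * occ (η k) * (1 - 2 * occ (η j))) := by
  have hsingle (j : Fin (p+1)) (η : Fin (p+1) → Bool) :
      rateFromCoeff R j η
          = R j ∅ + R j {j} * occ (η j)
            + ∑ k ∈ univ.erase j, R j {k} * occ (η k) * (1 - 2 * occ (η j)) ↔
        glauberGen (rateFromCoeff R) (Psi {j}) η
          = R j ∅ + (-2 * R j ∅ - R j {j}) * occ (η j)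
            + ∑ k ∈ univ.erase j, R j {k} * occ (η k) := by
    rw [glauberGen_Psi_singleton, mul_one_sub_two_occ_eq_iff, affine_mul_one_sub_two_occ]
  simp only [hsingle]
  constructor
  · rintro ⟨h1, -⟩ j
    exact glauberGen_Psi_singleton_eq_of_isPolyOfOrder_one R j (h1 j)
  · intro h
    have h1 (j : Fin (p+1)) : IsPolyOfOrder 1 (glauberGen (rateFromCoeff R) (Psi {j})) := by
      rw [funext (h j)]
      exact isPolyOfOrder_one_affine _ _ _ j
    refine ⟨h1, fun j k hjk => ?_⟩
    rw [funext (glauberGen_Psi_pair _ hjk)]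
    exact add_mem ((h1 j).mul_occ k) ((h1 k).mul_occ j)
end

section
/- Fix j ∈ Λ*_p and real coefficients R_{j,∅}, R_{j,{k}} (k ∈ Λ*_p), and let c_j(η) = R_{j,∅} + R_{j,{j}} η_j + Σ_{k≠j} R_{j,{k}} η_k (1 − 2η_j). Then c_j(η) ≥ 0 for every η ∈ Ω*_p if and only if both p_j := R_{j,∅} + R_{j,{j}} − Σ_{k∈ℙ_j} R_{j,{k}} ≥ 0 and q_j := R_{j,∅} + Σ_{k∈ℕ_j} R_{j,{k}} ≥ 0. -/
/-!
Once `η_j` is fixed, `c_j` is affine in the remaining occupations, with slopes `-R_{j,{k}}`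
if `η_j = 1` and `R_{j,{k}}` if `η_j = 0`. Its minimum over the cube is therefore `p_j`
(occupy exactly the sites with `R_{j,{k}} ≥ 0`) or `q_j` (occupy exactly those with
`R_{j,{k}} < 0`), and both minima are attained.
-/

open Finset

lemma occ_nonneg (b : Bool) : 0 ≤ occ b := by cases b <;> simp [occ]

lemma occ_le_one (b : Bool) : occ b ≤ 1 := by cases b <;> simp [occ]

section LinearFormOnCube

variable {ι : Type*} (s : Finset ι) (w : ι → ℝ)

theorem sum_filter_neg_le_sum_mul {x : ι → ℝ} (h0 : ∀ k ∈ s, 0 ≤ x k)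
    (h1 : ∀ k ∈ s, x k ≤ 1) : ∑ k ∈ s with w k < 0, w k ≤ ∑ k ∈ s, w k * x k := by
  rw [sum_filter]
  refine sum_le_sum fun k hk => ?_
  split_ifs with hw
  · nlinarith [h1 k hk]
  · exact mul_nonneg (not_lt.1 hw) (h0 k hk)

theorem sum_mul_le_sum_filter_nonneg {x : ι → ℝ} (h0 : ∀ k ∈ s, 0 ≤ x k)
    (h1 : ∀ k ∈ s, x k ≤ 1) : ∑ k ∈ s, w k * x k ≤ ∑ k ∈ s with 0 ≤ w k, w k := by
  rw [sum_filter]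
  refine sum_le_sum fun k hk => ?_
  split_ifs with hw
  · nlinarith [h1 k hk]
  · exact mul_nonpos_of_nonpos_of_nonneg (not_le.1 hw).le (h0 k hk)

theorem sum_mul_occ_decide (P : ι → Prop) [DecidablePred P] :
    ∑ k ∈ s, w k * occ (decide (P k)) = ∑ k ∈ s with P k, w k := by
  simp [occ, sum_filter]

end LinearFormOnCube

section Rate

variable {ι : Type*} [Fintype ι] [DecidableEq ι] (j : ι) (R0 : ℝ) (R1 : ι → ℝ)

def rate (η : ι → Bool) : ℝ :=
  R0 + R1 j * occ (η j) + ∑ k ∈ univ.erase j, R1 k * occ (η k) * (1 - 2 * occ (η j))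

variable {j R0 R1}

theorem rate_of_true {η : ι → Bool} (h : η j = true) :
    rate j R0 R1 η = R0 + R1 j - ∑ k ∈ univ.erase j, R1 k * occ (η k) := by
  rw [rate, h, show occ true = 1 from if_pos rfl, ← sum_mul]
  ring

theorem rate_of_false {η : ι → Bool} (h : η j = false) :
    rate j R0 R1 η = R0 + ∑ k ∈ univ.erase j, R1 k * occ (η k) := by
  simp [rate, h, occ]

theorem sum_erase_mul_occ_update (g : ι → Bool) (b : Bool) :
    ∑ k ∈ univ.erase j, R1 k * occ (Function.update g j b k)
      = ∑ k ∈ univ.erase j, R1 k * occ (g k) :=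
  sum_congr rfl fun _ hk => by rw [Function.update_of_ne (ne_of_mem_erase hk)]

theorem rate_lower_bound_of_true {η : ι → Bool} (h : η j = true) :
    R0 + R1 j - ∑ k ∈ univ.erase j with 0 ≤ R1 k, R1 k ≤ rate j R0 R1 η := by
  rw [rate_of_true h]
  have := sum_mul_le_sum_filter_nonneg (univ.erase j) R1 (x := fun k => occ (η k))
    (fun k _ => occ_nonneg _) (fun k _ => occ_le_one _)
  linarith

theorem rate_lower_bound_of_false {η : ι → Bool} (h : η j = false) :
    R0 + ∑ k ∈ univ.erase j with R1 k < 0, R1 k ≤ rate j R0 R1 η := by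
  rw [rate_of_false h]
  have := sum_filter_neg_le_sum_mul (univ.erase j) R1 (x := fun k => occ (η k))
    (fun k _ => occ_nonneg _) (fun k _ => occ_le_one _)
  linarith

theorem rate_update_true_decide_nonneg :
    rate j R0 R1 (Function.update (fun k => decide (0 ≤ R1 k)) j true)
      = R0 + R1 j - ∑ k ∈ univ.erase j with 0 ≤ R1 k, R1 k := by
  rw [rate_of_true (Function.update_self ..), sum_erase_mul_occ_update, sum_mul_occ_decide]

theorem rate_update_false_decide_neg :
    rate j R0 R1 (Function.update (fun k => decide (R1 k < 0)) j false)
      = R0 + ∑ k ∈ univ.erase j with R1 k < 0, R1 k := by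
  rw [rate_of_false (Function.update_self ..), sum_erase_mul_occ_update, sum_mul_occ_decide]

theorem rate_nonneg_iff :
    (∀ η, 0 ≤ rate j R0 R1 η) ↔
      0 ≤ R0 + R1 j - ∑ k ∈ univ.erase j with 0 ≤ R1 k, R1 k
        ∧ 0 ≤ R0 + ∑ k ∈ univ.erase j with R1 k < 0, R1 k := by
  refine ⟨fun h => ⟨?_, ?_⟩, fun ⟨hp, hq⟩ η => ?_⟩
  · exact rate_update_true_decide_nonneg (j := j) ▸ h _
  · exact rate_update_false_decide_neg (j := j) ▸ h _
  · cases hη : η j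
    · exact hq.trans (rate_lower_bound_of_false hη)
    · exact hp.trans (rate_lower_bound_of_true hη)

end Rate

/-- Sites of `Λ*_p = {-p, …, 0}` are indexed by `Fin (p+1)` (index `i` ↔ site `i - p`);
`R1 k` stands for `R_{j,{k}}`. -/
theorem stmt1 (p : ℕ) (j : Fin (p+1)) (R0 : ℝ) (R1 : Fin (p+1) → ℝ)
    (c : (Fin (p+1) → Bool) → ℝ)
    (hc : ∀ η : Fin (p+1) → Bool,
      c η = R0 + R1 j * occ (η j)
        + ∑ k ∈ Finset.univ.erase j, R1 k * occ (η k) * (1 - 2 * occ (η j))) :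
    (∀ η, 0 ≤ c η) ↔
      (0 ≤ R0 + R1 j - ∑ k ∈ (Finset.univ.erase j).filter (fun k => 0 ≤ R1 k), R1 k
        ∧ 0 ≤ R0 + ∑ k ∈ (Finset.univ.erase j).filter (fun k => R1 k < 0), R1 k) := by
  rw [show c = rate j R0 R1 from funext hc]
  exact rate_nonneg_iff
end

section
/- Fix j ∈ Λ*_p and suppose c_j(η) = R_{j,∅} + R_{j,{j}} η_j + Σ_{k≠j} R_{j,{k}} η_k (1 − 2η_j) satisfies c_j(η) ≥ 0 for all η ∈ Ω*_p. Then there exist a non-negative rate r_j ≥ 0, a density α_j ∈ [0,1], and non-negative rates c_{j,k} ≥ 0, a_{j,k} ≥ 0 (k ∈ Λ*_p, c_{j,j} = a_{j,j} = 0) such that for every η ∈ Ω*_p: c_j(η) = r_j [α_j(1−η_j) + (1−α_j)η_j] + Σ_{k∈Λ*_p} c_{j,k} [η_j(1−η_k) + η_k(1−η_j)] + Σ_{k∈Λ*_p} a_{j,k} [η_j η_k + (1−η_j)(1−η_k)]. -/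
/-!
Write each coupling as `R1 k = (R1 k)⁺ - (R1 k)⁻`. Pointwise,
`R1 k η_k (1 - 2η_j)` is `(R1 k)⁺` times the disagreement indicator of `η_j, η_k` plus `(R1 k)⁻`
times their agreement indicator, up to a term affine in `η_j`. Hence
`c_j = A (1 - η_j) + B η_j + (copying part) + (anti-copying part)` with nonnegative copying and
anti-copying rates. At `η_j = 0` (resp. `1`) with `η_k = 1` exactly when `R1 k < 0`
(resp. `R1 k > 0`) both parts vanish, so `A, B ≥ 0` follow from `c_j ≥ 0`; finally
`r = A + B` and `α = A / r`.
-/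

open Finset

@[simp] lemma occ_true : occ true = 1 := rfl

@[simp] lemma occ_false : occ false = 0 := rfl

lemma mul_occ_decide_pos (s : ℝ) : s * occ (decide (0 < s)) = s⁺ := by
  by_cases hs : 0 < s
  · simp [hs, posPart_eq_self.2 hs.le]
  · simp [hs, posPart_eq_zero.2 (not_lt.1 hs)]

lemma mul_occ_decide_neg (s : ℝ) : s * occ (decide (s < 0)) = -s⁻ := by
  by_cases hs : s < 0
  · simp [hs, negPart_eq_neg.2 hs.le]
  · simp [hs, negPart_eq_zero.2 (not_lt.1 hs)]

section Algebra

variable {K : Type*} [Field K] [LinearOrder K] [IsStrictOrderedRing K]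

lemma exists_rate_density_of_nonneg {A B : K} (hA : 0 ≤ A) (hB : 0 ≤ B) :
    ∃ r α : K, 0 ≤ r ∧ 0 ≤ α ∧ α ≤ 1 ∧ r * α = A ∧ r * (1 - α) = B := by
  rcases (add_nonneg hA hB).eq_or_lt with hAB | hAB
  · exact ⟨0, 0, le_rfl, le_rfl, zero_le_one, by linarith, by linarith⟩
  · refine ⟨A + B, A / (A + B), hAB.le, div_nonneg hA hAB.le,
      (div_le_one hAB).2 (by linarith), mul_div_cancel₀ _ hAB.ne', ?_⟩
    field_simp
    ring

lemma mul_mul_one_sub_two_mul_eq (s x y : K) :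
    s * y * (1 - 2 * x) = s⁺ * (x * (1 - y) + y * (1 - x)) + s⁻ * (x * y + (1 - x) * (1 - y))
      - s⁺ * x - s⁻ * (1 - x) := by
  conv_lhs => rw [← posPart_sub_negPart s]
  ring

lemma add_add_sum_mul_mul_one_sub_two_mul_eq {ι : Type*} (s : Finset ι) (R0 a x : K)
    (R1 y : ι → K) :
    R0 + a * x + ∑ k ∈ s, R1 k * y k * (1 - 2 * x)
      = (R0 - ∑ k ∈ s, (R1 k)⁻) * (1 - x) + (R0 + a - ∑ k ∈ s, (R1 k)⁺) * x
        + ∑ k ∈ s, (R1 k)⁺ * (x * (1 - y k) + y k * (1 - x))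
        + ∑ k ∈ s, (R1 k)⁻ * (x * y k + (1 - x) * (1 - y k)) := by
  simp only [mul_mul_one_sub_two_mul_eq, sum_sub_distrib, sum_add_distrib, ← sum_mul]
  ring

end Algebra

section LinearRate

variable {ι : Type*} [Fintype ι] [DecidableEq ι] (j : ι) (R0 : ℝ) (R1 : ι → ℝ)

lemma sum_ite_eq_zero_mul (f g : ι → ℝ) :
    ∑ k, (if k = j then 0 else f k) * g k = ∑ k ∈ univ.erase j, f k * g k := by
  rw [← sum_erase_add _ _ (mem_univ j), if_pos rfl, zero_mul, add_zero]
  exact sum_congr rfl fun k hk => by rw [if_neg (ne_of_mem_erase hk)]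

def linearRate (η : ι → Bool) : ℝ :=
  R0 + R1 j * occ (η j) + ∑ k ∈ univ.erase j, R1 k * occ (η k) * (1 - 2 * occ (η j))

lemma linearRate_update_false (b : ι → Bool) :
    linearRate j R0 R1 (Function.update b j false)
      = R0 + ∑ k ∈ univ.erase j, R1 k * occ (b k) := by
  have hterm (k) (hk : k ∈ univ.erase j) :
      R1 k * occ (Function.update b j false k) * (1 - 2 * occ (Function.update b j false j))
        = R1 k * occ (b k) := by
    rw [Function.update_of_ne (ne_of_mem_erase hk), Function.update_self]; simp
  rw [linearRate, sum_congr rfl hterm, Function.update_self]; simp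

lemma linearRate_update_true (b : ι → Bool) :
    linearRate j R0 R1 (Function.update b j true)
      = R0 + R1 j - ∑ k ∈ univ.erase j, R1 k * occ (b k) := by
  have hterm (k) (hk : k ∈ univ.erase j) :
      R1 k * occ (Function.update b j true k) * (1 - 2 * occ (Function.update b j true j))
        = -(R1 k * occ (b k)) := by
    rw [Function.update_of_ne (ne_of_mem_erase hk), Function.update_self]; simp; ring
  rw [linearRate, sum_congr rfl hterm, Function.update_self, sum_neg_distrib]; simp; ring

end LinearRate

/-- a non-negative rate of the form
`c_j(η) = R_{j,∅} + R_{j,{j}} η_j + Σ_{k ≠ j} R_{j,{k}} η_k (1 − 2η_j)`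
can be decomposed into reservoir, copying and anti-copying parts.
Sites of `Λ*_p = {-p, …, 0}` are indexed by `Fin (p+1)` (index `i` ↔ site `i - p`). -/
theorem stmt2 (p : ℕ) (j : Fin (p+1)) (R0 : ℝ) (R1 : Fin (p+1) → ℝ)
    (c : (Fin (p+1) → Bool) → ℝ)
    (hc : ∀ η : Fin (p+1) → Bool,
      c η = R0 + R1 j * occ (η j)
        + ∑ k ∈ Finset.univ.erase j, R1 k * occ (η k) * (1 - 2 * occ (η j)))
    (hpos : ∀ η, 0 ≤ c η) :
    ∃ (r αj : ℝ) (cc aa : Fin (p+1) → ℝ),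
      0 ≤ r ∧ 0 ≤ αj ∧ αj ≤ 1 ∧ (∀ k, 0 ≤ cc k) ∧ (∀ k, 0 ≤ aa k) ∧
      cc j = 0 ∧ aa j = 0 ∧
      ∀ η : Fin (p+1) → Bool,
        c η = r * (αj * (1 - occ (η j)) + (1 - αj) * occ (η j))
          + (∑ k : Fin (p+1),
              cc k * (occ (η j) * (1 - occ (η k)) + occ (η k) * (1 - occ (η j))))
          + ∑ k : Fin (p+1),
              aa k * (occ (η j) * occ (η k) + (1 - occ (η j)) * (1 - occ (η k))) := by
  obtain rfl : c = linearRate j R0 R1 := funext hc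
  have hA : 0 ≤ R0 - ∑ k ∈ univ.erase j, (R1 k)⁻ := by
    simpa only [linearRate_update_false, mul_occ_decide_neg, sum_neg_distrib, ← sub_eq_add_neg]
      using hpos (Function.update (fun k => decide (R1 k < 0)) j false)
  have hB : 0 ≤ R0 + R1 j - ∑ k ∈ univ.erase j, (R1 k)⁺ := by
    simpa only [linearRate_update_true, mul_occ_decide_pos]
      using hpos (Function.update (fun k => decide (0 < R1 k)) j true)
  obtain ⟨r, α, hr, hα0, hα1, hrα, hrα'⟩ := exists_rate_density_of_nonneg hA hB
  refine ⟨r, α, fun k => if k = j then 0 else (R1 k)⁺, fun k => if k = j then 0 else (R1 k)⁻,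
    hr, hα0, hα1, fun k => ite_nonneg le_rfl (posPart_nonneg _),
    fun k => ite_nonneg le_rfl (negPart_nonneg _), if_pos rfl, if_pos rfl, fun η => ?_⟩
  rw [sum_ite_eq_zero_mul, sum_ite_eq_zero_mul, linearRate,
    add_add_sum_mul_mul_one_sub_two_mul_eq, ← hrα, ← hrα']
  ring
end

section
/- If Σ_{j∈Λ*_p} r_j + Σ_{j,k∈Λ*_p} a_{j,k} > 0, then the continuous-time Markov chain on Ω*_p with generator L_l = L_S + L_R + L_C + L_A has a unique stationary state. -/
open Finset

/-- Exchange the occupation variables at sites `i` and `j`. -/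
def swapCfg {m : ℕ} (η : Fin m → Bool) (i j : Fin m) : Fin m → Bool :=
  fun k => η (Equiv.swap i j k)

/-- A stationary state of a generator `L` on a finite set `S`. -/
def IsStationaryState {S : Type*} [Fintype S] (L : (S → ℝ) → S → ℝ) (μ : S → ℝ) : Prop :=
  (∀ x, 0 ≤ μ x) ∧ (∑ x, μ x = 1) ∧ ∀ f : S → ℝ, ∑ x, μ x * L f x = 0

/- The sites of `Λ*_p = {-p, …, 0}` are indexed by `Fin (p+1)`, the index `i`
corresponding to the site `i - p`. -/

/-- Stirring dynamics on `Λ*_p`: exchanges at the pairs `(j, j+1)`, `-p ≤ j ≤ -1`. -/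
def LS (p : ℕ) (f : (Fin (p+1) → Bool) → ℝ) (η : Fin (p+1) → Bool) : ℝ :=
  ∑ i : Fin p, (f (swapCfg η i.castSucc i.succ) - f η)

/-- Reservoir dynamics. -/
def LR (p : ℕ) (r α : Fin (p+1) → ℝ)
    (f : (Fin (p+1) → Bool) → ℝ) (η : Fin (p+1) → Bool) : ℝ :=
  ∑ j : Fin (p+1),
    r j * (α j * (1 - occ (η j)) + occ (η j) * (1 - α j)) * (f (flipCfg η j) - f η)

/-- Copying dynamics. -/
def LC (p : ℕ) (cR : Fin (p+1) → Fin (p+1) → ℝ)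
    (f : (Fin (p+1) → Bool) → ℝ) (η : Fin (p+1) → Bool) : ℝ :=
  ∑ j : Fin (p+1), ∑ k : Fin (p+1),
    cR j k * (occ (η k) * (1 - occ (η j)) + occ (η j) * (1 - occ (η k))) *
      (f (flipCfg η j) - f η)

/-- Anti-copying dynamics. -/
def LA (p : ℕ) (aR : Fin (p+1) → Fin (p+1) → ℝ)
    (f : (Fin (p+1) → Bool) → ℝ) (η : Fin (p+1) → Bool) : ℝ :=
  ∑ j : Fin (p+1), ∑ k : Fin (p+1),
    aR j k * (occ (η j) * occ (η k) + (1 - occ (η j)) * (1 - occ (η k))) *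
      (f (flipCfg η j) - f η)


/-!
The generator is a rate matrix `Q` (off-diagonal entries `≥ 0`, row sums `0`) on the finite
configuration space. If `v Q = 0` then also `|v| Q = 0`, since the column sums of `|v| Q` are
nonnegative and add up to `0`; normalising `|v|` for a nonzero left null vector `v` gives a
stationary state. The support of a nonnegative stationary vector is closed under transitions, so
if some configuration `z` can be reached from everywhere, the stationary vectors `|d| ± d` built
from the difference `d` of two stationary states cannot both be nonzero, forcing `d = 0`.

Such a `z` exists: stirring realises every permutation of the sites, so any particle (or hole)
can be brought to a site where a reservoir with `r_j > 0` removes it (or fills it), which leads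
to a constant configuration; if instead `a_{j,k} > 0` with `j ≠ k`, moving two particles to `j`
and `k` lets anti-copying remove the one at `j`, which leads to the configuration with a single
particle at `j`.
-/

open Matrix

namespace Matrix

variable {S : Type*} [Fintype S] {Q : Matrix S S ℝ}

structure IsRateMatrix (Q : Matrix S S ℝ) : Prop where
  offDiag_nonneg : ∀ x y, x ≠ y → 0 ≤ Q x y
  row_sum : ∀ x, ∑ y, Q x y = 0

lemma sum_abs_mul_nonneg_of_vecMul_eq_zero (hoff : ∀ x y, x ≠ y → 0 ≤ Q x y)
    {v : S → ℝ} (hv : v ᵥ* Q = 0) (y : S) : 0 ≤ ∑ x, |v x| * Q x y := by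
  -- with `s = ±1` the sign of `v y`, subtract `s • (v ᵥ* Q) y = 0` termwise
  obtain ⟨s, hs, hsy⟩ : ∃ s : ℝ, (s = 1 ∨ s = -1) ∧ |v y| = s * v y := by
    rcases abs_choice (v y) with h | h
    · exact ⟨1, .inl rfl, by rw [h, one_mul]⟩
    · exact ⟨-1, .inr rfl, by rw [h, neg_one_mul]⟩
  have hvy : ∑ x, v x * Q x y = 0 := congrFun hv y
  calc 0 ≤ ∑ x, (|v x| - s * v x) * Q x y := by
        refine sum_nonneg fun x _ => ?_
        rcases eq_or_ne x y with rfl | hxy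
        · rw [hsy, sub_self, zero_mul]
        · refine mul_nonneg (sub_nonneg.2 ?_) (hoff x y hxy)
          rcases hs with rfl | rfl
          · linarith [le_abs_self (v x)]
          · linarith [neg_abs_le (v x)]
    _ = ∑ x, |v x| * Q x y := by
        simp only [sub_mul, sum_sub_distrib, mul_assoc, ← mul_sum, hvy, mul_zero, sub_zero]

lemma IsRateMatrix.abs_vecMul_eq_zero (hQ : IsRateMatrix Q) {v : S → ℝ} (hv : v ᵥ* Q = 0) :
    |v| ᵥ* Q = 0 := by
  have htotal : ∑ y, ∑ x, |v x| * Q x y = 0 := by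
    rw [sum_comm]
    simp only [← mul_sum, hQ.row_sum, mul_zero, sum_const_zero]
  funext y
  exact (sum_eq_zero_iff_of_nonneg fun y _ =>
    sum_abs_mul_nonneg_of_vecMul_eq_zero hQ.offDiag_nonneg hv y).1 htotal y (mem_univ y)

lemma pos_of_reflTransGen (hoff : ∀ x y, x ≠ y → 0 ≤ Q x y) {ν : S → ℝ} (hν : 0 ≤ ν)
    (hst : ν ᵥ* Q = 0) {a b : S} (hab : Relation.ReflTransGen (fun x y => 0 < Q x y) a b)
    (ha : 0 < ν a) : 0 < ν b := by
  induction hab with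
  | refl => exact ha
  | @tail x y _ hxy hx =>
    by_contra! hy
    have hy0 : ν y = 0 := le_antisymm hy (hν y)
    have : 0 < ∑ w, ν w * Q w y := by
      refine sum_pos' (fun w _ => ?_) ⟨x, mem_univ x, mul_pos hx hxy⟩
      rcases eq_or_ne w y with rfl | hwy
      · rw [hy0, zero_mul]
      · exact mul_nonneg (hν w) (hoff w y hwy)
    exact this.ne' (congrFun hst y)

lemma IsRateMatrix.exists_stationary [DecidableEq S] [Nonempty S] (hQ : IsRateMatrix Q) :
    ∃ μ : S → ℝ, 0 ≤ μ ∧ ∑ x, μ x = 1 ∧ μ ᵥ* Q = 0 := by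
  have hdet : Q.det = 0 := by
    refine exists_mulVec_eq_zero_iff.1 ⟨fun _ => 1, fun h => one_ne_zero (congrFun h
      (Classical.arbitrary S)), funext fun x => by simpa [mulVec, dotProduct] using hQ.row_sum x⟩
  obtain ⟨v, hv0, hv⟩ := exists_vecMul_eq_zero_iff.2 hdet
  have hpos : 0 < ∑ x, |v x| := by
    obtain ⟨x, hx⟩ := Function.ne_iff.1 hv0
    exact sum_pos' (fun x _ => abs_nonneg (v x)) ⟨x, mem_univ x, abs_pos.2 hx⟩
  refine ⟨(∑ x, |v x|)⁻¹ • |v|, fun x => ?_, ?_, ?_⟩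
  · exact smul_nonneg (inv_nonneg.2 hpos.le) (abs_nonneg (v x))
  · simp only [Pi.smul_apply, Pi.abs_apply, smul_eq_mul, ← mul_sum, inv_mul_cancel₀ hpos.ne']
  · rw [smul_vecMul, hQ.abs_vecMul_eq_zero hv, smul_zero]

lemma IsRateMatrix.eq_zero_of_vecMul_eq_zero_of_sum_eq_zero {z : S} (hQ : IsRateMatrix Q)
    (hreach : ∀ x, Relation.ReflTransGen (fun x y => 0 < Q x y) x z)
    {d : S → ℝ} (hd : d ᵥ* Q = 0) (hsum : ∑ x, d x = 0) : d = 0 := by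
  by_contra hne
  obtain ⟨a, -, ha⟩ := exists_pos_of_sum_zero_of_exists_nonzero d hsum
    (by simpa using Function.ne_iff.1 hne)
  obtain ⟨b, -, hb⟩ := exists_pos_of_sum_zero_of_exists_nonzero (s := univ) (-d)
    (by simp [hsum]) (by simpa using Function.ne_iff.1 hne)
  rw [Pi.neg_apply, neg_pos] at hb
  -- `|d| + d` and `|d| - d` are nonnegative stationary vectors with disjoint supports
  have habs := hQ.abs_vecMul_eq_zero hd
  have hplus : 0 < |d z| + d z := by
    refine pos_of_reflTransGen (ν := |d| + d) hQ.offDiag_nonneg (fun x => ?_)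
      (by simp [add_vecMul, habs, hd]) (hreach a) ?_
    · exact neg_le_iff_add_nonneg'.1 (neg_abs_le _)
    · simp only [Pi.add_apply, Pi.abs_apply]; linarith [le_abs_self (d a)]
  have hminus : 0 < |d z| - d z := by
    refine pos_of_reflTransGen (ν := |d| - d) hQ.offDiag_nonneg (fun x => ?_)
      (by simp [sub_vecMul, habs, hd]) (hreach b) ?_
    · exact sub_nonneg.2 (le_abs_self _)
    · simp only [Pi.sub_apply, Pi.abs_apply]; linarith [neg_abs_le (d b)]
  nlinarith [sq_abs (d z)]

theorem IsRateMatrix.existsUnique_stationary [DecidableEq S] {z : S} (hQ : IsRateMatrix Q)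
    (hreach : ∀ x, Relation.ReflTransGen (fun x y => 0 < Q x y) x z) :
    ∃! μ : S → ℝ, 0 ≤ μ ∧ ∑ x, μ x = 1 ∧ μ ᵥ* Q = 0 := by
  have : Nonempty S := ⟨z⟩
  obtain ⟨μ, hμ, hμ1, hμQ⟩ := hQ.exists_stationary
  refine ⟨μ, ⟨hμ, hμ1, hμQ⟩, fun ν ⟨_, hν1, hνQ⟩ => ?_⟩
  refine sub_eq_zero.1 (hQ.eq_zero_of_vecMul_eq_zero_of_sum_eq_zero hreach ?_ ?_)
  · rw [sub_vecMul, hνQ, hμQ, sub_zero]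
  · simp only [Pi.sub_apply, sum_sub_distrib, hν1, hμ1, sub_self]

end Matrix

lemma isStationaryState_iff {S : Type*} [Fintype S] [DecidableEq S]
    (L : (S → ℝ) →ₗ[ℝ] S → ℝ) (μ : S → ℝ) :
    IsStationaryState L μ ↔ 0 ≤ μ ∧ ∑ x, μ x = 1 ∧ μ ᵥ* LinearMap.toMatrix' L = 0 := by
  have hdot (f : S → ℝ) : ∑ x, μ x * L f x = μ ᵥ* LinearMap.toMatrix' L ⬝ᵥ f := by
    rw [← dotProduct_mulVec, LinearMap.toMatrix'_mulVec]; rfl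
  simp only [IsStationaryState, hdot, dotProduct_eq_zero_iff, Pi.le_def, Pi.zero_apply]

theorem Relation.ReflTransGen.of_descent {α : Type*} {R : α → α → Prop} (m : α → ℕ) {z : α}
    (h : ∀ x, ReflTransGen R x z ∨ ∃ y, ReflTransGen R x y ∧ m y < m x) (x : α) :
    ReflTransGen R x z :=
  (measure m).wf.induction x fun x ih =>
    (h x).elim id fun ⟨y, hxy, hy⟩ => hxy.trans (ih y hy)

lemma Equiv.Perm.exists_apply_eq_and_apply_eq {α : Type*} [DecidableEq α] {j k a c : α}
    (hjk : j ≠ k) (hac : a ≠ c) : ∃ σ : Perm α, σ j = a ∧ σ k = c := by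
  have hj : swap j a c ≠ j := by
    rw [Ne, swap_apply_eq_iff, swap_apply_left]; exact hac.symm
  refine ⟨swap j a * swap k (swap j a c), ?_, ?_⟩
  · rw [Perm.mul_apply, swap_apply_of_ne_of_ne hjk hj.symm, swap_apply_left]
  · rw [Perm.mul_apply, swap_apply_left, swap_apply_self]

lemma sum_mul_sub_nonneg {ι S : Type*} [Fintype ι] {c : ι → ℝ} (hc : ∀ i, 0 ≤ c i)
    {f : S → ℝ} (hf : 0 ≤ f) {x : S} (hx : f x = 0) (g : ι → S) :
    0 ≤ ∑ i, c i * (f (g i) - f x) := by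
  simp only [hx, sub_zero]
  exact sum_nonneg fun i _ => mul_nonneg (hc i) (hf _)

lemma mul_le_sum_mul_sub {ι S : Type*} [Fintype ι] {c : ι → ℝ} (hc : ∀ i, 0 ≤ c i)
    {f : S → ℝ} (hf : 0 ≤ f) {x : S} (hx : f x = 0) (g : ι → S) (i : ι) :
    c i * f (g i) ≤ ∑ i, c i * (f (g i) - f x) := by
  simp only [hx, sub_zero]
  exact single_le_sum (f := fun i => c i * f (g i)) (fun i _ => mul_nonneg (hc i) (hf _))
    (mem_univ i)

namespace BoundaryDynamics

variable {p : ℕ} {r α : Fin (p+1) → ℝ} {cR aR : Fin (p+1) → Fin (p+1) → ℝ}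

def generator (p : ℕ) (r α : Fin (p+1) → ℝ) (cR aR : Fin (p+1) → Fin (p+1) → ℝ) :
    ((Fin (p+1) → Bool) → ℝ) →ₗ[ℝ] (Fin (p+1) → Bool) → ℝ where
  toFun f η := LS p f η + LR p r α f η + LC p cR f η + LA p aR f η
  map_add' f g := by
    ext η
    simp only [LS, LR, LC, LA, Pi.add_apply, mul_sub, mul_add, sum_add_distrib, sum_sub_distrib]
    ring
  map_smul' c f := by
    ext η
    simp only [LS, LR, LC, LA, Pi.smul_apply, smul_eq_mul, RingHom.id_apply, mul_add, mul_sub,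
      mul_sum, mul_left_comm (b := c)]

def rateMatrix (p : ℕ) (r α : Fin (p+1) → ℝ) (cR aR : Fin (p+1) → Fin (p+1) → ℝ) :
    Matrix (Fin (p+1) → Bool) (Fin (p+1) → Bool) ℝ :=
  LinearMap.toMatrix' (generator p r α cR aR)

lemma rateMatrix_row_sum (η : Fin (p+1) → Bool) :
    ∑ ξ, rateMatrix p r α cR aR η ξ = 0 := by
  have h := congrFun (LinearMap.toMatrix'_mulVec (generator p r α cR aR) fun _ => 1) η
  have h1 : generator p r α cR aR (fun _ => 1) η = 0 := by simp [generator, LS, LR, LC, LA]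
  simpa [rateMatrix, h1, mulVec, dotProduct] using h

structure NonnegRates (r α : Fin (p+1) → ℝ) (cR aR : Fin (p+1) → Fin (p+1) → ℝ) : Prop where
  r_nonneg : ∀ j, 0 ≤ r j
  α_nonneg : ∀ j, 0 ≤ α j
  α_le_one : ∀ j, α j ≤ 1
  cR_nonneg : ∀ j k, 0 ≤ cR j k
  aR_nonneg : ∀ j k, 0 ≤ aR j k

def reservoirRate (r α : Fin (p+1) → ℝ) (j : Fin (p+1)) (b : Bool) : ℝ :=
  r j * (α j * (1 - occ b) + occ b * (1 - α j))

lemma exists_reservoirRate_pos (h : NonnegRates r α cR aR) {j : Fin (p+1)} (hj : 0 < r j) :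
    ∃ b, 0 < reservoirRate r α j b := by
  rcases (h.α_nonneg j).lt_or_eq with hα | hα
  · exact ⟨false, by simpa [reservoirRate, occ] using mul_pos hj hα⟩
  · exact ⟨true, by simpa [reservoirRate, occ, ← hα] using hj⟩

lemma reservoirRate_nonneg (h : NonnegRates r α cR aR) (j : Fin (p+1)) (b : Bool) :
    0 ≤ reservoirRate r α j b := by
  cases b <;> simp [reservoirRate, occ, h.r_nonneg j, h.α_nonneg j, h.α_le_one j, mul_nonneg]

def copyRate (cR : Fin (p+1) → Fin (p+1) → ℝ) (η : Fin (p+1) → Bool) (j k : Fin (p+1)) : ℝ :=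
  cR j k * (occ (η k) * (1 - occ (η j)) + occ (η j) * (1 - occ (η k)))

def anticopyRate (aR : Fin (p+1) → Fin (p+1) → ℝ) (η : Fin (p+1) → Bool) (j k : Fin (p+1)) :
    ℝ :=
  aR j k * (occ (η j) * occ (η k) + (1 - occ (η j)) * (1 - occ (η k)))

lemma copyRate_nonneg (h : NonnegRates r α cR aR) (η : Fin (p+1) → Bool) (j k : Fin (p+1)) :
    0 ≤ copyRate cR η j k := by
  rw [copyRate]
  cases η j <;> cases η k <;> simp [occ, h.cR_nonneg j k]

lemma anticopyRate_nonneg (h : NonnegRates r α cR aR) (η : Fin (p+1) → Bool) (j k : Fin (p+1)) :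
    0 ≤ anticopyRate aR η j k := by
  rw [anticopyRate]
  cases η j <;> cases η k <;> simp [occ, h.aR_nonneg j k]

lemma anticopyRate_of_eq {η : Fin (p+1) → Bool} {j k : Fin (p+1)} (hjk : η j = η k) :
    anticopyRate aR η j k = aR j k := by
  rw [anticopyRate, hjk]; cases η k <;> simp [occ]

section PositiveMaximumPrinciple

variable {f : (Fin (p+1) → Bool) → ℝ} {η : Fin (p+1) → Bool}

lemma LS_nonneg (hf : 0 ≤ f) (hη : f η = 0) : 0 ≤ LS p f η :=
  sum_nonneg fun _ _ => by rw [hη, sub_zero]; exact hf _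

lemma LR_nonneg (h : NonnegRates r α cR aR) (hf : 0 ≤ f) (hη : f η = 0) : 0 ≤ LR p r α f η :=
  sum_mul_sub_nonneg (fun j => reservoirRate_nonneg h j (η j)) hf hη _

lemma LC_nonneg (h : NonnegRates r α cR aR) (hf : 0 ≤ f) (hη : f η = 0) : 0 ≤ LC p cR f η := by
  rw [LC, ← Fintype.sum_prod_type']
  exact sum_mul_sub_nonneg (fun jk : Fin (p+1) × Fin (p+1) => copyRate_nonneg h η jk.1 jk.2)
    hf hη _

lemma LA_nonneg (h : NonnegRates r α cR aR) (hf : 0 ≤ f) (hη : f η = 0) : 0 ≤ LA p aR f η := by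
  rw [LA, ← Fintype.sum_prod_type']
  exact sum_mul_sub_nonneg (fun jk : Fin (p+1) × Fin (p+1) => anticopyRate_nonneg h η jk.1 jk.2)
    hf hη _

lemma generator_apply (f : (Fin (p+1) → Bool) → ℝ) (η : Fin (p+1) → Bool) :
    generator p r α cR aR f η = LS p f η + LR p r α f η + LC p cR f η + LA p aR f η :=
  rfl

lemma generator_nonneg (h : NonnegRates r α cR aR) (hf : 0 ≤ f) (hη : f η = 0) :
    0 ≤ generator p r α cR aR f η := by
  rw [generator_apply]
  linarith [LS_nonneg hf hη, LR_nonneg h hf hη, LC_nonneg h hf hη, LA_nonneg h hf hη]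

lemma le_generator_swap (h : NonnegRates r α cR aR) (hf : 0 ≤ f) (hη : f η = 0) (i : Fin p) :
    f (swapCfg η i.castSucc i.succ) ≤ generator p r α cR aR f η := by
  have hS : f (swapCfg η i.castSucc i.succ) ≤ LS p f η := by
    rw [LS]
    simpa [hη] using single_le_sum (f := fun i => f (swapCfg η i.castSucc i.succ) - f η)
      (fun i _ => by rw [hη, sub_zero]; exact hf _) (mem_univ i)
  rw [generator_apply]
  linarith [LR_nonneg h hf hη, LC_nonneg h hf hη, LA_nonneg h hf hη]

lemma le_generator_flip_reservoir (h : NonnegRates r α cR aR) (hf : 0 ≤ f) (hη : f η = 0)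
    (j : Fin (p+1)) :
    reservoirRate r α j (η j) * f (flipCfg η j) ≤ generator p r α cR aR f η := by
  have hR : _ ≤ LR p r α f η :=
    mul_le_sum_mul_sub (fun j => reservoirRate_nonneg h j (η j)) hf hη (fun j => flipCfg η j) j
  rw [generator_apply]
  linarith [LS_nonneg hf hη, LR_nonneg h hf hη, LC_nonneg h hf hη, LA_nonneg h hf hη]

lemma le_generator_flip_anticopy (h : NonnegRates r α cR aR) (hf : 0 ≤ f) (hη : f η = 0)
    {j k : Fin (p+1)} (hjk : η j = η k) :
    aR j k * f (flipCfg η j) ≤ generator p r α cR aR f η := by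
  have hA : anticopyRate aR η j k * f (flipCfg η j) ≤ LA p aR f η := by
    rw [LA, ← Fintype.sum_prod_type']
    exact mul_le_sum_mul_sub (fun jk : Fin (p+1) × Fin (p+1) => anticopyRate_nonneg h η jk.1 jk.2)
      hf hη (fun jk => flipCfg η jk.1) (j, k)
  rw [anticopyRate_of_eq hjk] at hA
  rw [generator_apply]
  linarith [LS_nonneg hf hη, LR_nonneg h hf hη, LC_nonneg h hf hη]

end PositiveMaximumPrinciple

lemma isRateMatrix_rateMatrix (h : NonnegRates r α cR aR) :
    IsRateMatrix (rateMatrix p r α cR aR) where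
  offDiag_nonneg _ _ hne :=
    generator_nonneg h (Pi.single_nonneg.2 zero_le_one) (Pi.single_eq_of_ne hne 1)
  row_sum := rateMatrix_row_sum

def Reachable (p : ℕ) (r α : Fin (p+1) → ℝ) (cR aR : Fin (p+1) → Fin (p+1) → ℝ) :
    (Fin (p+1) → Bool) → (Fin (p+1) → Bool) → Prop :=
  Relation.ReflTransGen fun η ξ => 0 < rateMatrix p r α cR aR η ξ

lemma reachable_of_le_generator {η ξ : Fin (p+1) → Bool} {c : ℝ} (hc : 0 < c)
    (hle : ∀ f : (Fin (p+1) → Bool) → ℝ, 0 ≤ f → f η = 0 →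
      c * f ξ ≤ generator p r α cR aR f η) :
    Reachable p r α cR aR η ξ := by
  obtain rfl | hne := eq_or_ne η ξ
  · exact .refl
  refine .single (lt_of_lt_of_le ?_ (hle _ (Pi.single_nonneg.2 zero_le_one)
    (Pi.single_eq_of_ne hne 1)))
  simpa using hc

lemma reachable_swap_castSucc_succ (h : NonnegRates r α cR aR) (η : Fin (p+1) → Bool)
    (i : Fin p) : Reachable p r α cR aR η (swapCfg η i.castSucc i.succ) :=
  reachable_of_le_generator one_pos fun _ hf hη => by
    simpa using le_generator_swap h hf hη i

lemma reachable_flip_of_reservoirRate_pos (h : NonnegRates r α cR aR) {η : Fin (p+1) → Bool}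
    {j : Fin (p+1)} (hj : 0 < reservoirRate r α j (η j)) :
    Reachable p r α cR aR η (flipCfg η j) :=
  reachable_of_le_generator hj fun _ hf hη => le_generator_flip_reservoir h hf hη j

lemma reachable_flip_of_anticopy (h : NonnegRates r α cR aR) {η : Fin (p+1) → Bool}
    {j k : Fin (p+1)} (hjk : η j = η k) (hak : 0 < aR j k) :
    Reachable p r α cR aR η (flipCfg η j) :=
  reachable_of_le_generator hak fun _ hf hη => le_generator_flip_anticopy h hf hη hjk

lemma reachable_comp_perm (h : NonnegRates r α cR aR) (σ : Equiv.Perm (Fin (p+1)))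
    (η : Fin (p+1) → Bool) : Reachable p r α cR aR η (η ∘ σ) := by
  let M : Submonoid (Equiv.Perm (Fin (p+1))) :=
    { carrier := {σ | ∀ η, Reachable p r α cR aR η (η ∘ σ)}
      one_mem' := fun _ => .refl
      mul_mem' := fun hσ hτ η => (hσ η).trans (hτ _) }
  have hM : Submonoid.closure (Set.range fun i : Fin p => Equiv.swap i.castSucc i.succ) ≤ M :=
    Submonoid.closure_le.2 <| Set.range_subset_iff.2 fun i η =>
      reachable_swap_castSucc_succ h η i
  rw [Equiv.Perm.mclosure_swap_castSucc_succ] at hM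
  exact hM (Submonoid.mem_top σ) η

def countNe {ι : Type*} [Fintype ι] (b : Bool) (η : ι → Bool) : ℕ := #{i | η i ≠ b}

lemma countNe_eq_zero {ι : Type*} [Fintype ι] {b : Bool} {η : ι → Bool} :
    countNe b η = 0 ↔ ∀ i, η i = b := by
  simp [countNe]

lemma countNe_comp_perm {ι : Type*} [Fintype ι] (b : Bool) (η : ι → Bool) (σ : Equiv.Perm ι) :
    countNe b (η ∘ σ) = countNe b η :=
  card_equiv σ (by simp)

lemma countNe_flipCfg_lt {m : ℕ} {b : Bool} {η : Fin m → Bool} {j : Fin m} (hj : η j ≠ b) :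
    countNe b (flipCfg η j) < countNe b η := by
  have : ({i | flipCfg η j i ≠ b} : Finset (Fin m)) = ({i | η i ≠ b} : Finset _).erase j := by
    ext i
    simp only [mem_filter, mem_erase, mem_univ, true_and]
    obtain rfl | hij := eq_or_ne i j
    · simpa [flipCfg] using hj
    · simp [flipCfg, hij]
  rw [countNe, countNe, this]
  exact card_erase_lt_of_mem (by simpa using hj)

lemma reachable_const (h : NonnegRates r α cR aR) {j : Fin (p+1)} {b : Bool}
    (hb : 0 < reservoirRate r α j b) (η : Fin (p+1) → Bool) :
    Reachable p r α cR aR η (fun _ => !b) := by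
  refine .of_descent (countNe (!b)) (fun η => ?_) η
  by_cases h0 : ∀ i, η i = !b
  · obtain rfl : η = fun _ => !b := funext h0
    exact .inl .refl
  obtain ⟨a, ha⟩ := not_forall.1 h0
  -- move a site holding `b` to `j`, where the reservoir flips it
  have hj : η a = b := by simpa using ha
  refine .inr ⟨_, (reachable_comp_perm h (Equiv.swap a j) η).trans
    (reachable_flip_of_reservoirRate_pos (j := j) h (by simpa [hj] using hb)), ?_⟩
  calc countNe (!b) (flipCfg (η ∘ Equiv.swap a j) j) < countNe (!b) (η ∘ Equiv.swap a j) :=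
        countNe_flipCfg_lt (by simp [hj])
    _ = countNe (!b) η := countNe_comp_perm _ _ _

lemma reachable_single (h : NonnegRates r α cR aR) {j k : Fin (p+1)} (hjk : j ≠ k)
    (hak : 0 < aR j k) (η : Fin (p+1) → Bool) :
    Reachable p r α cR aR η (flipCfg (fun _ => false) j) := by
  refine .of_descent (countNe false) (fun η => ?_) η
  obtain h0 | h1 | h2 : countNe false η = 0 ∨ countNe false η = 1 ∨ 1 < countNe false η := by
    omega
  · obtain rfl : η = fun _ => false := funext (by simpa using countNe_eq_zero.1 h0)
    exact .inl (reachable_flip_of_anticopy h rfl hak)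
  · obtain ⟨a, ha⟩ := card_eq_one.1 h1
    have hη : ∀ i, η i = true ↔ i = a := by simpa [Finset.ext_iff] using ha
    have : η ∘ Equiv.swap a j = flipCfg (fun _ => false) j := by
      funext i
      rw [Bool.eq_iff_iff]
      simp [hη, flipCfg, Function.update_apply, Equiv.swap_apply_eq_iff]
    exact .inl (this ▸ reachable_comp_perm h _ η)
  · obtain ⟨a, ha, c, hc, hac⟩ := one_lt_card.1 h2
    obtain ⟨σ, hσj, hσk⟩ := Equiv.Perm.exists_apply_eq_and_apply_eq hjk hac
    -- occupy both `j` and `k`; then anti-copying empties `j`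
    have hj : (η ∘ σ) j = true := by simpa [hσj] using ha
    have hk : (η ∘ σ) k = true := by simpa [hσk] using hc
    refine .inr ⟨_, (reachable_comp_perm h σ η).trans
      (reachable_flip_of_anticopy h (hj.trans hk.symm) hak), ?_⟩
    calc countNe false (flipCfg (η ∘ σ) j) < countNe false (η ∘ σ) :=
          countNe_flipCfg_lt (by rw [hj]; decide)
      _ = countNe false η := countNe_comp_perm _ _ _

end BoundaryDynamics

open BoundaryDynamics in
theorem stmt3_general (p : ℕ) (r α : Fin (p+1) → ℝ) (cR aR : Fin (p+1) → Fin (p+1) → ℝ)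
    (hr : ∀ j, 0 ≤ r j) (hα0 : ∀ j, 0 ≤ α j) (hα1 : ∀ j, α j ≤ 1)
    (hc : ∀ j k, 0 ≤ cR j k) (ha : ∀ j k, 0 ≤ aR j k)
    (had : ∀ j, aR j j = 0)
    (hpos : 0 < (∑ j, r j) + ∑ j, ∑ k, aR j k) :
    ∃! μ : (Fin (p+1) → Bool) → ℝ,
      IsStationaryState (fun f η => LS p f η + LR p r α f η + LC p cR f η + LA p aR f η) μ := by
  have h : NonnegRates r α cR aR := ⟨hr, hα0, hα1, hc, ha⟩
  have hcase : (∃ j, 0 < r j) ∨ ∃ j k, 0 < aR j k := by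
    by_contra! hcon
    exact hpos.not_ge (add_nonpos (sum_nonpos fun j _ => hcon.1 j)
      (sum_nonpos fun j _ => sum_nonpos fun k _ => hcon.2 j k))
  obtain ⟨z, hz⟩ : ∃ z, ∀ η, Reachable p r α cR aR η z := by
    obtain ⟨j, hj⟩ | ⟨j, k, hjk⟩ := hcase
    · obtain ⟨b, hb⟩ := exists_reservoirRate_pos h hj
      exact ⟨_, reachable_const h hb⟩
    · exact ⟨_, reachable_single h (by rintro rfl; simp [had] at hjk) hjk⟩
  exact (existsUnique_congr fun μ => isStationaryState_iff (generator p r α cR aR) μ).2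
    ((isRateMatrix_rateMatrix h).existsUnique_stationary hz)

/-- if `Σ_j r_j + Σ_{j,k} a_{j,k} > 0`, the chain with generator
`L_l = L_S + L_R + L_C + L_A` has a unique stationary state. -/
theorem stmt3 (p : ℕ) (r α : Fin (p+1) → ℝ) (cR aR : Fin (p+1) → Fin (p+1) → ℝ)
    (hr : ∀ j, 0 ≤ r j) (hα0 : ∀ j, 0 ≤ α j) (hα1 : ∀ j, α j ≤ 1)
    (hc : ∀ j k, 0 ≤ cR j k) (ha : ∀ j k, 0 ≤ aR j k)
    (hcd : ∀ j, cR j j = 0) (had : ∀ j, aR j j = 0)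
    (hpos : 0 < (∑ j, r j) + ∑ j, ∑ k, aR j k) :
    ∃! μ : (Fin (p+1) → Bool) → ℝ,
      IsStationaryState (fun f η => LS p f η + LR p r α f η + LC p cR f η + LA p aR f η) μ :=
  stmt3_general p r α cR aR hr hα0 hα1 hc ha had hpos
end

section
/- If Σ_{j∈Λ*_p} r_j + Σ_{j,k∈Λ*_p} a_{j,k} = 0 and Σ_{j,k∈Λ*_p} c_{j,k} > 0, then a probability measure μ on Ω*_p is a stationary state of the generator L_l = L_S + L_R + L_C + L_A if and only if μ is supported on the two constant configurations (the configuration with all sites occupied and the configuration with all sites empty); in particular the extremal stationary states are exactly the two Dirac measures concentrated on these two configurations. -/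
open Finset

/-- A stationary state of a generator `L` on a finite set `S`. -/
def IsStationaryL {S : Type*} [Fintype S] (L : (S → ℝ) → S → ℝ) (μ : S → ℝ) : Prop :=
  (∀ x, 0 ≤ μ x) ∧ (∑ x, μ x = 1) ∧ ∀ f : S → ℝ, ∑ x, μ x * L f x = 0

/-! Since the reservoir and anti-copying rates are nonnegative with zero sum, they all vanish, and
`L_S + L_C` is the generator of a jump process on configurations (`stirCopyKernel`) for which the
two constant configurations are absorbing. Testing stationarity against the indicator of a
configuration `ξ` balances the probability flow into `ξ` against the flow out of it; if the latter
vanishes, every configuration with a positive rate into `ξ` has mass zero. This propagates backwards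
along paths into an absorbing configuration, and every configuration has such a path: stirring
realises every permutation of the sites, so an occupied site can be brought to `j₀` and an empty
one to `k₀` for a pair with `c_{j₀,k₀} > 0`, and copying at `j₀` then lowers the particle number. -/

open Relation

section JumpProcess

variable {S : Type*} [Fintype S]

def jumpGenerator (q : S → S → ℝ) (f : S → ℝ) (x : S) : ℝ :=
  ∑ y, q x y * (f y - f x)

lemma jumpGenerator_eq_zero_of_absorbing {q : S → S → ℝ} {x : S} (hx : ∀ y ≠ x, q x y = 0)
    (f : S → ℝ) : jumpGenerator q f x = 0 :=
  Finset.sum_eq_zero fun y _ => by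
    rcases eq_or_ne y x with rfl | hy
    · rw [sub_self, mul_zero]
    · rw [hx y hy, zero_mul]

lemma sum_mul_jumpGenerator_eq_zero {q : S → S → ℝ} {μ : S → ℝ}
    (hμ : ∀ x, μ x ≠ 0 → ∀ y ≠ x, q x y = 0) (f : S → ℝ) :
    ∑ x, μ x * jumpGenerator q f x = 0 :=
  Finset.sum_eq_zero fun x _ => by
    by_cases hx : μ x = 0
    · rw [hx, zero_mul]
    · rw [jumpGenerator_eq_zero_of_absorbing (hμ x hx), mul_zero]

variable [DecidableEq S] {q : S → S → ℝ} {μ : S → ℝ}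

lemma jumpGenerator_single_of_ne {x ξ : S} (h : x ≠ ξ) :
    jumpGenerator q (Pi.single ξ 1) x = q x ξ := by
  simp [jumpGenerator, Pi.single_apply, h]

lemma eq_zero_of_stationary_of_rate_pos (hq : ∀ x y, 0 ≤ q x y) (hμ : ∀ x, 0 ≤ μ x)
    (hstat : ∀ f, ∑ x, μ x * jumpGenerator q f x = 0) {ξ : S}
    (hξ : μ ξ = 0 ∨ ∀ y ≠ ξ, q ξ y = 0) {x : S} (hxξ : x ≠ ξ) (hrate : 0 < q x ξ) :
    μ x = 0 := by
  have hout : μ ξ * jumpGenerator q (Pi.single ξ 1) ξ = 0 := by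
    rcases hξ with h | h
    · rw [h, zero_mul]
    · rw [jumpGenerator_eq_zero_of_absorbing h, mul_zero]
  have hin : ∑ y ∈ Finset.univ.erase ξ, μ y * q y ξ = 0 := by
    rw [← hstat (Pi.single ξ 1), ← Finset.add_sum_erase _ _ (Finset.mem_univ ξ), hout, zero_add]
    exact Finset.sum_congr rfl fun y hy => by
      rw [jumpGenerator_single_of_ne (Finset.ne_of_mem_erase hy)]
  have hterm := (Finset.sum_eq_zero_iff_of_nonneg fun y _ => mul_nonneg (hμ y) (hq y ξ)).1 hin x
    (Finset.mem_erase.2 ⟨hxξ, Finset.mem_univ x⟩)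
  exact (mul_eq_zero.1 hterm).resolve_right hrate.ne'

lemma eq_or_eq_zero_of_reflTransGen (hq : ∀ x y, 0 ≤ q x y) (hμ : ∀ x, 0 ≤ μ x)
    (hstat : ∀ f, ∑ x, μ x * jumpGenerator q f x = 0) {ζ : S} (hζ : ∀ y ≠ ζ, q ζ y = 0)
    {x : S} (h : ReflTransGen (fun x y => 0 < q x y) x ζ) : x = ζ ∨ μ x = 0 := by
  induction h using ReflTransGen.head_induction_on with
  | refl => exact Or.inl rfl
  | @head x y hxy _ ih =>
    rcases eq_or_ne x y with rfl | hne
    · exact ih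
    refine Or.inr (eq_zero_of_stationary_of_rate_pos hq hμ hstat ?_ hne hxy)
    rcases ih with rfl | h
    · exact Or.inr hζ
    · exact Or.inl h

end JumpProcess

lemma sum_mul_sub_eq_sum_kernel {ι S : Type*} [Fintype ι] [Fintype S] [DecidableEq S]
    (w : ι → ℝ) (T : ι → S) (f : S → ℝ) (c : ℝ) :
    ∑ i, w i * (f (T i) - c) = ∑ y, (∑ i, if T i = y then w i else 0) * (f y - c) := by
  simp only [Finset.sum_mul, ite_mul, zero_mul]
  rw [Finset.sum_comm]
  simp

lemma reflTransGen_comp_perm {n : ℕ} {β : Type*} {R : (Fin (n+1) → β) → (Fin (n+1) → β) → Prop}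
    (hR : ∀ η (i : Fin n), R η (η ∘ Equiv.swap i.castSucc i.succ))
    (σ : Equiv.Perm (Fin (n+1))) (η : Fin (n+1) → β) : ReflTransGen R η (η ∘ σ) := by
  have hσ : σ ∈ Submonoid.closure (Set.range fun i : Fin n => Equiv.swap i.castSucc i.succ) := by
    rw [Equiv.Perm.mclosure_swap_castSucc_succ]; trivial
  induction hσ using Submonoid.closure_induction generalizing η with
  | mem τ hτ =>
    obtain ⟨i, rfl⟩ := hτ
    exact ReflTransGen.single (hR η i)
  | one => exact ReflTransGen.refl
  | mul σ τ _ _ hσ hτ => exact (hσ η).trans (hτ (η ∘ σ))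

lemma exists_perm_apply_eq_apply_eq {α : Type*} [DecidableEq α] {j k a b : α} (hjk : j ≠ k)
    (hab : a ≠ b) : ∃ σ : Equiv.Perm α, σ j = a ∧ σ k = b := by
  refine ⟨Equiv.swap j a * Equiv.swap k (Equiv.swap j a b), ?_, ?_⟩
  · have hj : j ≠ Equiv.swap j a b := by
      intro h
      rw [eq_comm, Equiv.swap_apply_eq_iff, Equiv.swap_apply_left] at h
      exact hab h.symm
    simp [Equiv.swap_apply_of_ne_of_ne hjk hj]
  · simp

def trueCount {m : ℕ} (η : Fin m → Bool) : ℕ := ∑ j, (η j).toNat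

lemma trueCount_comp_perm {m : ℕ} (η : Fin m → Bool) (σ : Equiv.Perm (Fin m)) :
    trueCount (η ∘ σ) = trueCount η :=
  Equiv.sum_comp σ fun j => (η j).toNat

lemma trueCount_flipCfg_lt {m : ℕ} {η : Fin m → Bool} {j : Fin m} (hj : η j = true) :
    trueCount (flipCfg η j) < trueCount η := by
  refine Finset.sum_lt_sum (fun i _ => ?_) ⟨j, Finset.mem_univ j, by simp [flipCfg, hj]⟩
  rcases eq_or_ne i j with rfl | hi
  · simp [flipCfg, hj]
  · simp [flipCfg, Function.update_of_ne hi]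

lemma occ_mul_one_sub_add_occ_mul_one_sub (a b : Bool) :
    occ a * (1 - occ b) + occ b * (1 - occ a) = if a = b then 0 else 1 := by
  cases a <;> cases b <;> norm_num [occ]

def copyRate {p : ℕ} (cR : Fin (p+1) → Fin (p+1) → ℝ) (η : Fin (p+1) → Bool) (j : Fin (p+1)) : ℝ :=
  ∑ k, if η k = η j then 0 else cR j k

def stirCopyKernel (p : ℕ) (cR : Fin (p+1) → Fin (p+1) → ℝ) (η ξ : Fin (p+1) → Bool) : ℝ :=
  (∑ i : Fin p, if swapCfg η i.castSucc i.succ = ξ then 1 else 0) +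
    ∑ j, if flipCfg η j = ξ then copyRate cR η j else 0

lemma LS_add_LC_eq_jumpGenerator (p : ℕ) (cR : Fin (p+1) → Fin (p+1) → ℝ)
    (f : (Fin (p+1) → Bool) → ℝ) (η : Fin (p+1) → Bool) :
    LS p f η + LC p cR f η = jumpGenerator (stirCopyKernel p cR) f η := by
  have hS : LS p f η = ∑ i : Fin p, 1 * (f (swapCfg η i.castSucc i.succ) - f η) := by
    simp [LS]
  have hC : LC p cR f η = ∑ j, copyRate cR η j * (f (flipCfg η j) - f η) := by
    simp only [LC, copyRate, occ_mul_one_sub_add_occ_mul_one_sub, mul_ite, mul_zero, mul_one,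
      Finset.sum_mul]
  rw [sum_mul_sub_eq_sum_kernel] at hS hC
  rw [hS, hC, ← Finset.sum_add_distrib]
  simp only [jumpGenerator, stirCopyKernel, add_mul]

section StirringCopying

variable {p : ℕ} {cR : Fin (p+1) → Fin (p+1) → ℝ}

lemma copyRate_nonneg (hc : ∀ j k, 0 ≤ cR j k) (η : Fin (p+1) → Bool) (j : Fin (p+1)) :
    0 ≤ copyRate cR η j :=
  Finset.sum_nonneg fun k _ => by split_ifs <;> simp [hc]

lemma stirCopyKernel_nonneg (hc : ∀ j k, 0 ≤ cR j k) (η ξ : Fin (p+1) → Bool) :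
    0 ≤ stirCopyKernel p cR η ξ :=
  add_nonneg (Finset.sum_nonneg fun _ _ => by split_ifs <;> norm_num)
    (Finset.sum_nonneg fun j _ => by split_ifs <;> simp [copyRate_nonneg hc])

lemma stirCopyKernel_const_eq_zero (b : Bool) {ξ : Fin (p+1) → Bool} (hξ : ξ ≠ fun _ => b) :
    stirCopyKernel p cR (fun _ => b) ξ = 0 := by
  have hswap : ∀ a c : Fin (p+1), swapCfg (fun _ => b) a c = fun _ => b := fun _ _ => rfl
  have hcopy : ∀ j, copyRate cR (fun _ => b) j = 0 := fun j => by
    simp [copyRate]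
  simp [stirCopyKernel, hswap, hξ.symm, hcopy]

lemma stirCopyKernel_swap_pos (hc : ∀ j k, 0 ≤ cR j k) (η : Fin (p+1) → Bool) (i : Fin p) :
    0 < stirCopyKernel p cR η (swapCfg η i.castSucc i.succ) := by
  refine add_pos_of_pos_of_nonneg
    (Finset.sum_pos' (fun _ _ => by positivity) ⟨i, Finset.mem_univ i, by simp⟩) ?_
  exact Finset.sum_nonneg fun j _ => by split_ifs <;> simp [copyRate_nonneg hc]

lemma stirCopyKernel_flip_pos (hc : ∀ j k, 0 ≤ cR j k) {η : Fin (p+1) → Bool} {j k : Fin (p+1)}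
    (hjk : η j ≠ η k) (hpos : 0 < cR j k) : 0 < stirCopyKernel p cR η (flipCfg η j) := by
  have hrate : 0 < copyRate cR η j := by
    refine Finset.sum_pos' (fun k' _ => by split_ifs <;> simp [hc]) ⟨k, Finset.mem_univ k, ?_⟩
    rwa [if_neg (Ne.symm hjk)]
  refine add_pos_of_nonneg_of_pos (Finset.sum_nonneg fun _ _ => by positivity) ?_
  refine Finset.sum_pos' (fun j' _ => ?_) ⟨j, Finset.mem_univ j, by simpa using hrate⟩
  split_ifs <;> simp [copyRate_nonneg hc]

lemma reflTransGen_stirCopyKernel_const (hc : ∀ j k, 0 ≤ cR j k) {j₀ k₀ : Fin (p+1)}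
    (hjk : j₀ ≠ k₀) (hpos : 0 < cR j₀ k₀) (η : Fin (p+1) → Bool) :
    ReflTransGen (fun x y => 0 < stirCopyKernel p cR x y) η (fun _ => true) ∨
      ReflTransGen (fun x y => 0 < stirCopyKernel p cR x y) η (fun _ => false) := by
  induction hn : trueCount η using Nat.strong_induction_on generalizing η with
  | _ n ih =>
  by_cases htrue : ∀ j, η j = true
  · exact Or.inl (by rw [show η = _ from funext htrue])
  by_cases hfalse : ∀ j, η j = false
  · exact Or.inr (by rw [show η = _ from funext hfalse])
  simp only [not_forall, Bool.not_eq_true, Bool.not_eq_false] at htrue hfalse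
  obtain ⟨b, hb⟩ := htrue
  obtain ⟨a, ha⟩ := hfalse
  obtain ⟨σ, hσj, hσk⟩ := exists_perm_apply_eq_apply_eq hjk (show a ≠ b by grind)
  have hperm := reflTransGen_comp_perm (R := fun x y => 0 < stirCopyKernel p cR x y)
    (stirCopyKernel_swap_pos hc) σ η
  have hflip : 0 < stirCopyKernel p cR (η ∘ σ) (flipCfg (η ∘ σ) j₀) :=
    stirCopyKernel_flip_pos hc (by simp [hσj, hσk, ha, hb]) hpos
  have hlt : trueCount (flipCfg (η ∘ σ) j₀) < n := by
    rw [← hn, ← trueCount_comp_perm η σ]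
    exact trueCount_flipCfg_lt (by simp [hσj, ha])
  rcases ih _ hlt _ rfl with h | h
  · exact Or.inl ((hperm.tail hflip).trans h)
  · exact Or.inr ((hperm.tail hflip).trans h)

end StirringCopying

theorem stmt4_general (p : ℕ) (r α : Fin (p+1) → ℝ) (cR aR : Fin (p+1) → Fin (p+1) → ℝ)
    (hr : ∀ j, 0 ≤ r j)
    (hc : ∀ j k, 0 ≤ cR j k) (ha : ∀ j k, 0 ≤ aR j k)
    (hcd : ∀ j, cR j j = 0)
    (hzero : (∑ j, r j) + (∑ j, ∑ k, aR j k) = 0)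
    (hcpos : 0 < ∑ j, ∑ k, cR j k) :
    ∀ μ : (Fin (p+1) → Bool) → ℝ,
      IsStationaryL (fun f η => LS p f η + LR p r α f η + LC p cR f η + LA p aR f η) μ ↔
        ((∀ η, 0 ≤ μ η) ∧ (∑ η, μ η = 1) ∧
          ∀ η : Fin (p+1) → Bool,
            η ≠ (fun _ => true) → η ≠ (fun _ => false) → μ η = 0) := by
  have hsum_a : ∀ j, 0 ≤ ∑ k, aR j k := fun j => Finset.sum_nonneg fun k _ => ha j k
  obtain ⟨hsum_r0, hsum_a0⟩ := (add_eq_zero_iff_of_nonneg (Finset.sum_nonneg fun j _ => hr j)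
    (Finset.sum_nonneg fun j _ => hsum_a j)).1 hzero
  have hr0 : r = 0 := (Fintype.sum_eq_zero_iff_of_nonneg hr).1 hsum_r0
  have ha0 : aR = 0 := funext fun j => (Fintype.sum_eq_zero_iff_of_nonneg (ha j)).1
    (congrFun ((Fintype.sum_eq_zero_iff_of_nonneg hsum_a).1 hsum_a0) j)
  have hL : ∀ f η, LS p f η + LR p r α f η + LC p cR f η + LA p aR f η =
      jumpGenerator (stirCopyKernel p cR) f η := fun f η => by
    simp [LR, LA, hr0, ha0, ← LS_add_LC_eq_jumpGenerator]
  obtain ⟨j₀, k₀, hpos⟩ : ∃ j k, 0 < cR j k := by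
    by_contra! h
    exact hcpos.not_ge (Finset.sum_nonpos fun j _ => Finset.sum_nonpos fun k _ => h j k)
  have hjk : j₀ ≠ k₀ := by rintro rfl; exact hpos.ne' (hcd j₀)
  intro μ
  simp only [IsStationaryL, hL]
  refine and_congr_right fun hμ0 => and_congr_right fun _ => ⟨fun hstat η h₁ h₂ => ?_, fun h => ?_⟩
  · have hq := stirCopyKernel_nonneg hc
    rcases reflTransGen_stirCopyKernel_const hc hjk hpos η with hreach | hreach
    · exact (eq_or_eq_zero_of_reflTransGen hq hμ0 hstat
        (fun _ => stirCopyKernel_const_eq_zero true) hreach).resolve_left h₁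
    · exact (eq_or_eq_zero_of_reflTransGen hq hμ0 hstat
        (fun _ => stirCopyKernel_const_eq_zero false) hreach).resolve_left h₂
  · refine sum_mul_jumpGenerator_eq_zero fun η hη => ?_
    by_cases h₁ : η = fun _ => true
    · exact h₁ ▸ fun _ => stirCopyKernel_const_eq_zero true
    by_cases h₂ : η = fun _ => false
    · exact h₂ ▸ fun _ => stirCopyKernel_const_eq_zero false
    exact absurd (h η h₁ h₂) hη

/-- if `Σ_j r_j + Σ_{j,k} a_{j,k} = 0` and `Σ_{j,k} c_{j,k} > 0`,
then a probability measure is stationary for `L_l = L_S + L_R + L_C + L_A`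
iff it is supported on the two constant configurations (all occupied / all empty). -/
theorem stmt4 (p : ℕ) (r α : Fin (p+1) → ℝ) (cR aR : Fin (p+1) → Fin (p+1) → ℝ)
    (hr : ∀ j, 0 ≤ r j) (hα0 : ∀ j, 0 ≤ α j) (hα1 : ∀ j, α j ≤ 1)
    (hc : ∀ j k, 0 ≤ cR j k) (ha : ∀ j k, 0 ≤ aR j k)
    (hcd : ∀ j, cR j j = 0) (had : ∀ j, aR j j = 0)
    (hzero : (∑ j, r j) + (∑ j, ∑ k, aR j k) = 0)
    (hcpos : 0 < ∑ j, ∑ k, cR j k) :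
    ∀ μ : (Fin (p+1) → Bool) → ℝ,
      IsStationaryL (fun f η => LS p f η + LR p r α f η + LC p cR f η + LA p aR f η) μ ↔
        ((∀ η, 0 ≤ μ η) ∧ (∑ η, μ η = 1) ∧
          ∀ η : Fin (p+1) → Bool,
            η ≠ (fun _ => true) → η ≠ (fun _ => false) → μ η = 0) :=
  stmt4_general p r α cR aR hr hc ha hcd hzero hcpos
end

section
/- Let μ_N be the unique stationary state of L_N on Ω_N and ρ_N(k) = E_{μ_N}[η_k]. Then for all k ∈ Λ_N = {1, …, N−1}: ρ_N(k) = ((N−k)/(N−1)) ρ_N(1) + ((k−1)/(N−1)) β. -/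
/-! Test stationarity against the occupation `η_j` of a site `2 ≤ j ≤ N - 1`. The left boundary
never touches `η_j`, the exclusion dynamics acts on it as the discrete Laplacian, and the right
reservoir plays the role of a ghost site `N` of density `β`. So `ρ_N`, extended by `ρ_N(N) = β`, is
discrete harmonic on `{2, …, N - 1}`, hence affine on `{1, …, N}`. -/

open Finset Filter Topology

/-- A stationary state of a generator `L` on a finite set `S`. -/
def IsStationaryGen {S : Type*} [Fintype S] (L : (S → ℝ) → S → ℝ) (μ : S → ℝ) : Prop :=
  (∀ x, 0 ≤ μ x) ∧ (∑ x, μ x = 1) ∧ ∀ f : S → ℝ, ∑ x, μ x * L f x = 0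

/-- Expectation of `g` under the (finitely supported) measure `μ`. -/
def expVal {S : Type*} [Fintype S] (μ : S → ℝ) (g : S → ℝ) : ℝ := ∑ x, μ x * g x

/- The sites of `Λ_N = {1, …, N-1}` are indexed by `Fin (N-1)`, the index `i`
corresponding to the site `i + 1`. -/

/-- The projection `η ↦ (η_1, …, η_p)` on the first `p` coordinates. -/
def projCfg (N p : ℕ) (hpN : p < N) (η : Fin (N-1) → Bool) : Fin p → Bool :=
  fun i => η ⟨i.1, by have := i.isLt; omega⟩

/-- Left boundary generator: `(L_l f)(η) = c(η_1, …, η_p)[f(σ¹η) − f(η)]`. -/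
def Lleft (N p : ℕ) (hp : 1 ≤ p) (hpN : p < N) (c : (Fin p → Bool) → ℝ)
    (f : (Fin (N-1) → Bool) → ℝ) (η : Fin (N-1) → Bool) : ℝ :=
  c (projCfg N p hpN η) * (f (flipCfg η ⟨0, by omega⟩) - f η)

/-- Symmetric exclusion in the bulk (exchanges at `(k, k+1)`, `1 ≤ k ≤ N-2`). -/
def Lbulk (N : ℕ) (f : (Fin (N-1) → Bool) → ℝ) (η : Fin (N-1) → Bool) : ℝ :=
  ∑ k : Fin (N-2),
    (f (swapCfg η ⟨k.1, by have := k.isLt; omega⟩ ⟨k.1 + 1, by have := k.isLt; omega⟩) - f η)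

/-- Right reservoir at density `β`, acting on the site `N-1`. -/
def Lright (N : ℕ) (hN : 2 ≤ N) (β : ℝ)
    (f : (Fin (N-1) → Bool) → ℝ) (η : Fin (N-1) → Bool) : ℝ :=
  (β * (1 - occ (η ⟨N - 2, by omega⟩)) + (1 - β) * occ (η ⟨N - 2, by omega⟩)) *
    (f (flipCfg η ⟨N - 2, by omega⟩) - f η)

/-- The full generator `L_N = L_l + L_{b,N} + L_{r,N}`. -/
def LN (N p : ℕ) (hp : 1 ≤ p) (hpN : p < N) (c : (Fin p → Bool) → ℝ) (β : ℝ)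
    (f : (Fin (N-1) → Bool) → ℝ) (η : Fin (N-1) → Bool) : ℝ :=
  Lleft N p hp hpN c f η + Lbulk N f η + Lright N (by omega) β f η

/-- The configuration `(a, ξ) ∈ {0,1}^p` obtained by prepending `a` to
`ξ ∈ Ω_p = {0,1}^{p-1}`. -/
def consCfg (p : ℕ) (a : Bool) (ξ : Fin (p-1) → Bool) : Fin p → Bool :=
  fun i => if h : i.1 = 0 then a else ξ ⟨i.1 - 1, by have := i.isLt; omega⟩

/-- The occupation of the index `i` (site `i + 1`), every index `i ≥ m` beyond the chain being read
as a ghost site of density `b`. -/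
def occExt {m : ℕ} (b : ℝ) (η : Fin m → Bool) (i : ℕ) : ℝ :=
  if h : i < m then occ (η ⟨i, h⟩) else b

section occExt

variable {m : ℕ} (b : ℝ) (η : Fin m → Bool)

lemma occExt_of_lt {i : ℕ} (h : i < m) : occExt b η i = occ (η ⟨i, h⟩) := dif_pos h

lemma occExt_of_le {i : ℕ} (h : m ≤ i) : occExt b η i = b := dif_neg (by omega)

lemma occExt_flipCfg_of_ne (i : Fin m) {j : ℕ} (h : i.1 ≠ j) :
    occExt b (flipCfg η i) j = occExt b η j := by
  unfold occExt flipCfg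
  split_ifs with hj
  · rw [Function.update_of_ne (by rw [ne_eq, Fin.ext_iff]; exact h.symm)]
  · rfl

lemma occExt_swapCfg_succ_sub {k j : ℕ} (hk : k + 1 < m) (hj : j < m) :
    occExt b (swapCfg η ⟨k, by omega⟩ ⟨k + 1, hk⟩) j - occExt b η j
      = (if k = j then occExt b η (j + 1) - occExt b η j else 0)
        + (if k + 1 = j then occExt b η (j - 1) - occExt b η j else 0) := by
  by_cases hkj : k = j
  · subst hkj
    simp [occExt, swapCfg, hj, hk]
  · by_cases hkj' : k + 1 = j
    · subst hkj'
      simp [occExt, swapCfg, hk, show k < m by omega]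
    · have hfix : Equiv.swap (⟨k, by omega⟩ : Fin m) ⟨k + 1, hk⟩ ⟨j, hj⟩ = ⟨j, hj⟩ :=
        Equiv.swap_apply_of_ne_of_ne (by simp only [ne_eq, Fin.mk.injEq]; omega)
          (by simp only [ne_eq, Fin.mk.injEq]; omega)
      simp [occExt, swapCfg, hj, hkj, hkj', hfix]

end occExt

section expVal

variable {S : Type*} [Fintype S] (μ : S → ℝ)

lemma expVal_add (f g : S → ℝ) : expVal μ (fun x => f x + g x) = expVal μ f + expVal μ g := by
  simp only [expVal, mul_add, sum_add_distrib]

lemma expVal_sub (f g : S → ℝ) : expVal μ (fun x => f x - g x) = expVal μ f - expVal μ g := by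
  simp only [expVal, mul_sub, sum_sub_distrib]

lemma expVal_const_mul (a : ℝ) (f : S → ℝ) : expVal μ (fun x => a * f x) = a * expVal μ f := by
  simp only [expVal, mul_sum]
  exact sum_congr rfl fun x _ => by ring

lemma expVal_const {μ : S → ℝ} (hμ : ∑ x, μ x = 1) (a : ℝ) : expVal μ (fun _ => a) = a := by
  rw [expVal, ← sum_mul, hμ, one_mul]

end expVal

section generator

variable {N : ℕ} (β : ℝ) (η : Fin (N - 1) → Bool) {j : ℕ}

lemma Lleft_occExt (p : ℕ) (hp : 1 ≤ p) (hpN : p < N) (c : (Fin p → Bool) → ℝ) (hj : 1 ≤ j) :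
    Lleft N p hp hpN c (fun η => occExt β η j) η = 0 := by
  rw [Lleft, occExt_flipCfg_of_ne _ _ _ (by simp only [ne_eq]; omega), sub_self, mul_zero]

lemma Lbulk_occExt (hj1 : 1 ≤ j) (hj : j < N - 1) :
    Lbulk N (fun η => occExt β η j) η
      = (occExt β η (j - 1) - occExt β η j)
        + if j < N - 2 then occExt β η (j + 1) - occExt β η j else 0 := by
  rw [Lbulk, sum_congr rfl fun k _ => occExt_swapCfg_succ_sub β η (by omega) hj,
    Fin.sum_univ_eq_sum_range (fun k => (if k = j then occExt β η (j + 1) - occExt β η j else 0)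
        + if k + 1 = j then occExt β η (j - 1) - occExt β η j else 0),
    sum_add_distrib, sum_ite_eq', add_comm]
  congr 1
  · rw [sum_eq_single_of_mem (j - 1) (mem_range.2 (by omega)) fun k _ hk => if_neg (by omega),
      if_pos (by omega)]
  · simp only [mem_range]

lemma Lright_occExt (hN : 2 ≤ N) (hj : j < N - 1) :
    Lright N hN β (fun η => occExt β η j) η
      = if j < N - 2 then 0 else occExt β η (j + 1) - occExt β η j := by
  split_ifs with hjN
  · rw [Lright, occExt_flipCfg_of_ne _ _ _ (by simp only [ne_eq]; omega), sub_self, mul_zero]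
  · obtain rfl : j = N - 2 := by omega
    rw [Lright, occExt_of_le β η (by omega : N - 1 ≤ N - 2 + 1), occExt_of_lt β η hj,
      occExt_of_lt β _ hj, flipCfg, Function.update_self]
    cases η ⟨N - 2, hj⟩ <;> simp [occ]

lemma LN_occExt (p : ℕ) (hp : 1 ≤ p) (hpN : p < N) (c : (Fin p → Bool) → ℝ)
    (hj1 : 1 ≤ j) (hj : j < N - 1) :
    LN N p hp hpN c β (fun η => occExt β η j) η
      = occExt β η (j - 1) - 2 * occExt β η j + occExt β η (j + 1) := by
  rw [LN, Lleft_occExt β η p hp hpN c hj1, Lbulk_occExt β η hj1 hj, Lright_occExt β η _ hj]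
  split_ifs <;> ring

end generator

lemma IsStationaryGen.expVal_occExt_second_diff_eq_zero {N p : ℕ} {hp : 1 ≤ p} {hpN : p < N}
    {c : (Fin p → Bool) → ℝ} {β : ℝ} {μ : (Fin (N - 1) → Bool) → ℝ}
    (hμ : IsStationaryGen (LN N p hp hpN c β) μ) {j : ℕ} (hj1 : 1 ≤ j) (hj : j < N - 1) :
    expVal μ (fun η => occExt β η (j - 1)) - 2 * expVal μ (fun η => occExt β η j)
      + expVal μ (fun η => occExt β η (j + 1)) = 0 := by
  have h : expVal μ (fun η => LN N p hp hpN c β (fun η => occExt β η j) η) = 0 := hμ.2.2 _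
  rwa [funext fun η => LN_occExt β η p hp hpN c hj1 hj, expVal_add, expVal_sub,
    expVal_const_mul] at h

lemma affine_of_second_diff_eq_zero {M : ℕ} {R : ℕ → ℝ}
    (h : ∀ j, 1 ≤ j → j < M → R (j - 1) - 2 * R j + R (j + 1) = 0) :
    ∀ j ≤ M, R j = R 0 + j * (R 1 - R 0) := by
  intro j hj
  induction j using Nat.strong_induction_on with
  | _ j ih =>
    match j with
    | 0 => simp
    | 1 => simp
    | i + 2 =>
      have hi := h (i + 1) (by omega) (by omega)
      rw [Nat.add_sub_cancel, ih i (by omega) (by omega), ih (i + 1) (by omega) (by omega)] at hi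
      push_cast at hi ⊢
      linarith

lemma mul_eq_interpolation_of_second_diff_eq_zero {M : ℕ} {R : ℕ → ℝ}
    (h : ∀ j, 1 ≤ j → j < M → R (j - 1) - 2 * R j + R (j + 1) = 0) {j : ℕ} (hj : j ≤ M) :
    M * R j = (M - j) * R 0 + j * R M := by
  rw [affine_of_second_diff_eq_zero h j hj, affine_of_second_diff_eq_zero h M le_rfl]
  ring

/-- the stationary density profile interpolates linearly between
`ρ_N(1)` and `β`: `ρ_N(k) = ((N−k)/(N−1)) ρ_N(1) + ((k−1)/(N−1)) β`. -/
theorem stmt12 (N p : ℕ) (hp : 1 ≤ p) (hpN : p < N) (β : ℝ)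
    (c : (Fin p → Bool) → ℝ)
    (μ : (Fin (N-1) → Bool) → ℝ) (hμ : IsStationaryGen (LN N p hp hpN c β) μ) :
    ∀ (k : ℕ) (hk1 : 1 ≤ k) (hk2 : k ≤ N - 1),
      expVal μ (fun η => occ (η ⟨k - 1, by omega⟩))
        = ((N : ℝ) - k) / ((N : ℝ) - 1) * expVal μ (fun η => occ (η ⟨0, by omega⟩))
          + ((k : ℝ) - 1) / ((N : ℝ) - 1) * β := by
  intro k hk1 hk2
  set ρ : ℕ → ℝ := fun j => expVal μ (fun η => occExt β η j) with hρ
  have hinterp := mul_eq_interpolation_of_second_diff_eq_zero (M := N - 1) (R := ρ)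
    (fun j hj1 hj => hμ.expVal_occExt_second_diff_eq_zero hj1 hj) (j := k - 1) (by omega)
  have hρ_last : ρ (N - 1) = β := by
    simp only [hρ, occExt_of_le β _ le_rfl, expVal_const hμ.2.1]
  have hρ_site : ∀ i (hi : i < N - 1), expVal μ (fun η => occ (η ⟨i, hi⟩)) = ρ i :=
    fun i hi => by simp only [hρ, occExt_of_lt β _ hi]
  have hN : (N : ℝ) - 1 ≠ 0 := by
    have : (2 : ℝ) ≤ N := by exact_mod_cast (by omega : 2 ≤ N)
    linarith
  rw [hρ_site, hρ_site]
  rw [hρ_last] at hinterp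
  push_cast [Nat.cast_sub (by omega : 1 ≤ N), Nat.cast_sub hk1] at hinterp
  field_simp
  linarith
end

section
/- Let S be a finite set, L the generator of an irreducible continuous-time Markov chain on S with unique stationary probability measure μ, and L* the adjoint of L in L²(μ). Then there exists a finite constant C₀, depending only on the chain, such that for every ε > 0 and every function F: S → [0,∞) with Σ_{x∈S} F(x)μ(x) = 1 and Σ_{x∈S} |(L*F)(x)| μ(x) ≤ ε, one has max_{x∈S} |F(x) − 1| ≤ C₀ √ε. -/
open Finset

/-- The generator of the continuous-time Markov chain on `S` with jump rates `R`. -/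
def chainGen {S : Type*} [Fintype S] (R : S → S → ℝ)
    (f : S → ℝ) (x : S) : ℝ :=
  ∑ y, R x y * (f y - f x)

/-!
Stationarity of `μ` turns `⟨F, LF⟩_μ` into minus half the Dirichlet form
`Σ μ(x) R(x,y) (F(y) − F(x))²`, and the adjoint moves `L` onto `F`, so the Dirichlet form of a
density `F` is `O(ε)`. Hence `|F(b) − F(a)| = O(√ε)` along every edge of positive rate, then by
irreducibility between any two states, and finally `|F(x) − 1| = O(√ε)` because `1` is the
`μ`-average of `F`.
-/

def dirichletForm {S : Type*} [Fintype S] (R : S → S → ℝ) (μ f : S → ℝ) : ℝ :=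
  ∑ x, ∑ y, μ x * R x y * (f y - f x) ^ 2

section DirichletForm

variable {S : Type*} [Fintype S] {R : S → S → ℝ} {μ : S → ℝ}

theorem dirichletForm_eq_neg_two_mul (hμ : ∀ g : S → ℝ, ∑ x, μ x * chainGen R g x = 0)
    (f : S → ℝ) : dirichletForm R μ f = -2 * ∑ x, μ x * f x * chainGen R f x := by
  -- `(f y - f x)² = (f y² - f x²) - 2 f x (f y - f x)`, and the first part has mean zero.
  have hsplit : dirichletForm R μ f =
      ∑ x, μ x * chainGen R (fun z => f z ^ 2) x - 2 * ∑ x, μ x * f x * chainGen R f x := by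
    simp only [dirichletForm, chainGen, mul_sum, ← sum_sub_distrib]
    exact sum_congr rfl fun x _ => sum_congr rfl fun y _ => by ring
  rw [hsplit, hμ, zero_sub, neg_mul]

theorem mul_sq_le_dirichletForm (hR : ∀ x y, 0 ≤ R x y) (hμ : ∀ x, 0 ≤ μ x) (f : S → ℝ)
    (a b : S) : μ a * R a b * (f b - f a) ^ 2 ≤ dirichletForm R μ f := by
  have hterm : ∀ x y, 0 ≤ μ x * R x y * (f y - f x) ^ 2 := fun x y => by
    have := hR x y; have := hμ x; positivity
  calc μ a * R a b * (f b - f a) ^ 2 ≤ ∑ y, μ a * R a y * (f y - f a) ^ 2 :=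
        single_le_sum (fun y _ => hterm a y) (mem_univ b)
    _ ≤ dirichletForm R μ f :=
        single_le_sum (f := fun x => ∑ y, μ x * R x y * (f y - f x) ^ 2)
          (fun x _ => sum_nonneg fun y _ => hterm x y) (mem_univ a)

theorem dirichletForm_le_of_isAdjoint (hμ : IsStationaryGen (chainGen R) μ)
    {Lstar : (S → ℝ) → S → ℝ}
    (hadj : ∀ f g : S → ℝ, ∑ x, μ x * f x * Lstar g x = ∑ x, μ x * g x * chainGen R f x)
    {F : S → ℝ} {K : ℝ} (hF : ∀ x, 0 ≤ F x) (hFK : ∀ x, F x ≤ K) :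
    dirichletForm R μ F ≤ 2 * K * ∑ x, |Lstar F x| * μ x := by
  have hpair : ∀ x, -(μ x * F x * Lstar F x) ≤ K * (|Lstar F x| * μ x) := fun x =>
    calc -(μ x * F x * Lstar F x) ≤ μ x * F x * |Lstar F x| := by
          rw [← mul_neg]
          exact mul_le_mul_of_nonneg_left (neg_le_abs _) (mul_nonneg (hμ.1 x) (hF x))
      _ ≤ μ x * K * |Lstar F x| := by
          gcongr
          exacts [hμ.1 x, hFK x]
      _ = K * (|Lstar F x| * μ x) := by ring
  calc dirichletForm R μ F = 2 * ∑ x, -(μ x * F x * Lstar F x) := by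
        rw [dirichletForm_eq_neg_two_mul hμ.2.2, ← hadj, sum_neg_distrib]; ring
    _ ≤ 2 * ∑ x, K * (|Lstar F x| * μ x) := by gcongr with x; exact hpair x
    _ = 2 * K * ∑ x, |Lstar F x| * μ x := by rw [← mul_sum, mul_assoc]

end DirichletForm

theorem exists_pos_le_of_pos {α : Type*} [Finite α] (g : α → ℝ) :
    ∃ c > 0, ∀ a, 0 < g a → c ≤ g a := by
  cases isEmpty_or_nonempty α
  · exact ⟨1, one_pos, fun a => isEmptyElim a⟩
  obtain ⟨a₀, ha₀⟩ := Finite.exists_min fun a => if 0 < g a then g a else 1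
  refine ⟨if 0 < g a₀ then g a₀ else 1, by split_ifs <;> simp_all, fun a ha => ?_⟩
  simpa [ha] using ha₀ a

theorem exists_nat_abs_sub_le_of_reflTransGen {S : Type*} {r : S → S → Prop} {x y : S}
    (h : Relation.ReflTransGen r x y) :
    ∃ n : ℕ, ∀ (f : S → ℝ) (B : ℝ), (∀ a b, r a b → |f b - f a| ≤ B) → |f y - f x| ≤ n * B := by
  induction h with
  | refl => exact ⟨0, fun f B _ => by simp⟩
  | @tail b c _ hbc ih =>
    obtain ⟨n, hn⟩ := ih
    refine ⟨n + 1, fun f B hedge => ?_⟩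
    calc |f c - f x| ≤ |f c - f b| + |f b - f x| := abs_sub_le _ _ _
      _ ≤ B + n * B := add_le_add (hedge b c hbc) (hn f B hedge)
      _ = (n + 1 : ℕ) * B := by push_cast; ring

theorem exists_nat_abs_sub_le_of_forall_reflTransGen {S : Type*} [Finite S]
    {r : S → S → Prop} (hr : ∀ x y, Relation.ReflTransGen r x y) :
    ∃ N : ℕ, ∀ (f : S → ℝ) (B : ℝ), 0 ≤ B → (∀ a b, r a b → |f b - f a| ≤ B) →
      ∀ x y, |f y - f x| ≤ N * B := by
  have := Fintype.ofFinite S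
  choose n hn using fun x y => exists_nat_abs_sub_le_of_reflTransGen (hr x y)
  refine ⟨univ.sup fun p : S × S => n p.1 p.2, fun f B hB hedge x y => ?_⟩
  have hnN : n x y ≤ univ.sup fun p : S × S => n p.1 p.2 :=
    le_sup (f := fun p : S × S => n p.1 p.2) (mem_univ (x, y))
  exact (hn x y f B hedge).trans (by gcongr)

theorem abs_sum_mul_sub_le {S : Type*} [Fintype S] {μ f : S → ℝ} (hμ : ∀ y, 0 ≤ μ y)
    (hμ1 : ∑ y, μ y = 1) {a D : ℝ} (hf : ∀ y, |f y - a| ≤ D) :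
    |∑ y, f y * μ y - a| ≤ D := by
  have hmean : ∑ y, f y * μ y - a = ∑ y, (f y - a) * μ y := by
    simp only [sub_mul, sum_sub_distrib, ← mul_sum, hμ1, mul_one]
  calc |∑ y, f y * μ y - a| ≤ ∑ y, |f y - a| * μ y := by
        rw [hmean]
        refine (abs_sum_le_sum_abs _ _).trans_eq (sum_congr rfl fun y _ => ?_)
        rw [abs_mul, abs_of_nonneg (hμ y)]
    _ ≤ ∑ y, D * μ y := sum_le_sum fun y _ => mul_le_mul_of_nonneg_right (hf y) (hμ y)
    _ = D := by rw [← mul_sum, hμ1, mul_one]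

theorem stmt18_general {S : Type*} [Fintype S]
    (R : S → S → ℝ) (hR : ∀ x y, 0 ≤ R x y)
    (hirr : ∀ x y : S, Relation.ReflTransGen (fun a b => 0 < R a b) x y)
    (μ : S → ℝ) (hμ : IsStationaryGen (chainGen R) μ) (hμpos : ∀ x, 0 < μ x)
    (Lstar : (S → ℝ) → S → ℝ)
    (hadj : ∀ f g : S → ℝ,
      ∑ x, μ x * f x * Lstar g x = ∑ x, μ x * g x * chainGen R f x) :
    ∃ C₀ : ℝ, ∀ ε : ℝ, 0 < ε → ∀ F : S → ℝ,
      (∀ x, 0 ≤ F x) → (∑ x, F x * μ x = 1) →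
      (∑ x, |Lstar F x| * μ x ≤ ε) →
      ∀ x, |F x - 1| ≤ C₀ * Real.sqrt ε := by
  obtain ⟨m, hm, hmμ⟩ := exists_pos_le_of_pos μ
  obtain ⟨c, hc, hcμR⟩ := exists_pos_le_of_pos fun p : S × S => μ p.1 * R p.1 p.2
  obtain ⟨N, hN⟩ := exists_nat_abs_sub_le_of_forall_reflTransGen hirr
  refine ⟨N * √(2 / (m * c)), fun ε _ F hF hF1 hLF x => ?_⟩
  have hFm : ∀ x, F x ≤ 1 / m := fun x => by
    rw [le_div_iff₀ hm, ← hF1]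
    exact (mul_le_mul_of_nonneg_left (hmμ x (hμpos x)) (hF x)).trans
      (single_le_sum (fun y _ => mul_nonneg (hF y) (hμpos y).le) (mem_univ x))
  have hQ : dirichletForm R μ F ≤ 2 / m * ε := by
    calc dirichletForm R μ F ≤ 2 * (1 / m) * ∑ x, |Lstar F x| * μ x :=
          dirichletForm_le_of_isAdjoint hμ hadj hF hFm
      _ ≤ 2 / m * ε := by rw [mul_one_div]; gcongr
  have hedge : ∀ a b, 0 < R a b → |F b - F a| ≤ √(2 / (m * c)) * √ε := fun a b hab => by
    rw [← Real.sqrt_mul (by positivity)]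
    refine Real.abs_le_sqrt ?_
    rw [div_mul_eq_div_div, div_mul_eq_mul_div, le_div_iff₀ hc]
    calc (F b - F a) ^ 2 * c ≤ μ a * R a b * (F b - F a) ^ 2 := by
          rw [mul_comm]; gcongr; exact hcμR (a, b) (mul_pos (hμpos a) hab)
      _ ≤ 2 / m * ε := (mul_sq_le_dirichletForm hR (fun x => (hμpos x).le) F a b).trans hQ
  have hosc := hN F _ (by positivity) hedge x
  rw [← hF1, abs_sub_comm, mul_assoc]
  exact abs_sum_mul_sub_le hμ.1 hμ.2.1 hosc

/-- for an irreducible chain on a finite set `S` with stationary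
state `μ` and `L²(μ)`-adjoint `L*`, there is a constant `C₀` (depending only on
the chain) such that every non-negative density `F` (`Σ F μ = 1`) with
`Σ |L*F| μ ≤ ε` satisfies `max_x |F(x) − 1| ≤ C₀ √ε`. -/
theorem stmt18 {S : Type*} [Fintype S] [Nonempty S]
    (R : S → S → ℝ) (hR : ∀ x y, 0 ≤ R x y)
    (hirr : ∀ x y : S, Relation.ReflTransGen (fun a b => 0 < R a b) x y)
    (μ : S → ℝ) (hμ : IsStationaryGen (chainGen R) μ) (hμpos : ∀ x, 0 < μ x)
    (Lstar : (S → ℝ) → S → ℝ)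
    (hadj : ∀ f g : S → ℝ,
      ∑ x, μ x * f x * Lstar g x = ∑ x, μ x * g x * chainGen R f x) :
    ∃ C₀ : ℝ, ∀ ε : ℝ, 0 < ε → ∀ F : S → ℝ,
      (∀ x, 0 ≤ F x) → (∑ x, F x * μ x = 1) →
      (∑ x, |Lstar F x| * μ x ≤ ε) →
      ∀ x, |F x - 1| ≤ C₀ * Real.sqrt ε :=
  stmt18_general R hR hirr μ hμ hμpos Lstar hadj
end

section
/- Fix an integer N ≥ 4 and a real number c. The function φ(j,k) = −c² (j−1)(N−k)/(N−2), defined on D̂_N ∪ ∂D̂_N, is the unique function that vanishes on ∂D̂_N and satisfies (ℒ_N φ)(j,k) + F(j,k) = 0 for every (j,k) ∈ D̂_N, where F(j,k) = −c² if k = j+1 and F(j,k) = 0 otherwise. -/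
/-!
Existence is a direct computation: `(j - 1)(N - k)` is bilinear, so the discrete Laplacian kills it
off the diagonal, while on the diagonal the two one-sided differences add up to `2 - N`.
Uniqueness is the maximum principle: if `ℒ_N η = 0` on `D̂_N`, then at a maximiser of `η` with
smallest `j` the left neighbour `(j - 1, k)` is again a maximiser (a vanishing sum of non-positive
differences has vanishing terms), so that maximiser lies on `∂D̂_N`. Applying this to `±(ψ - φ)`
gives `ψ = φ`.
-/

/-- The interior of the discrete simplex: `D̂_N = {(j,k) : 2 ≤ j < k ≤ N−1}`. -/
def inDhat (N : ℕ) (j k : ℤ) : Prop := 2 ≤ j ∧ j < k ∧ k ≤ (N : ℤ) - 1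

/-- Its boundary: `∂D̂_N = {(1,k) : 3 ≤ k ≤ N−1} ∪ {(j,N) : 2 ≤ j ≤ N−2}`. -/
def inBdry (N : ℕ) (j k : ℤ) : Prop :=
  (j = 1 ∧ 3 ≤ k ∧ k ≤ (N : ℤ) - 1) ∨ (k = (N : ℤ) ∧ 2 ≤ j ∧ j ≤ (N : ℤ) - 2)

/-- The absorbed random-walk generator `ℒ_N` on the discrete simplex: the full
discrete Laplacian off the diagonal, and the one-sided differences
`[φ(k−1,k+1) − φ(k,k+1)] + [φ(k,k+2) − φ(k,k+1)]` at diagonal points `(k,k+1)`. -/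
def Lrw (φ : ℤ → ℤ → ℝ) (j k : ℤ) : ℝ :=
  if 1 < k - j then
    φ (j-1) k + φ (j+1) k + φ j (k-1) + φ j (k+1) - 4 * φ j k
  else
    (φ (j-1) k - φ j k) + (φ j (k+1) - φ j k)

open Finset

open Classical in
noncomputable def closedSimplex (N : ℕ) : Finset (ℤ × ℤ) :=
  (Icc 1 (N : ℤ) ×ˢ Icc 1 (N : ℤ)).filter fun p => inDhat N p.1 p.2 ∨ inBdry N p.1 p.2

lemma mem_closedSimplex {N : ℕ} {p : ℤ × ℤ} :
    p ∈ closedSimplex N ↔ inDhat N p.1 p.2 ∨ inBdry N p.1 p.2 := by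
  simp only [closedSimplex, mem_filter, mem_product, mem_Icc, and_iff_right_iff_imp]
  unfold inDhat inBdry
  omega

lemma inDhat.neighbours_mem_closedSimplex {N : ℕ} {j k : ℤ} (h : inDhat N j k) :
    (j - 1, k) ∈ closedSimplex N ∧ (j, k + 1) ∈ closedSimplex N ∧
      (1 < k - j → (j + 1, k) ∈ closedSimplex N ∧ (j, k - 1) ∈ closedSimplex N) := by
  simp only [mem_closedSimplex]
  unfold inDhat inBdry at *
  omega

section Lrw

variable (φ ψ : ℤ → ℤ → ℝ) (j k : ℤ)

lemma Lrw_sub : Lrw (fun a b => φ a b - ψ a b) j k = Lrw φ j k - Lrw ψ j k := by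
  unfold Lrw; split_ifs <;> ring

lemma Lrw_const_mul (r : ℝ) : Lrw (fun a b => r * φ a b) j k = r * Lrw φ j k := by
  unfold Lrw; split_ifs <;> ring

lemma Lrw_mul_sub (x y : ℝ) :
    Lrw (fun a b => ((a : ℝ) - x) * (y - b)) j k =
      if 1 < k - j then 0 else x - y + ((k : ℝ) - j) := by
  unfold Lrw; split_ifs <;> push_cast <;> ring

end Lrw

section MaximumPrinciple

variable {N : ℕ} {η : ℤ → ℤ → ℝ}

lemma left_eq_of_Lrw_eq_zero_of_le {j k : ℤ} (h : inDhat N j k) (hL : Lrw η j k = 0)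
    (hmax : ∀ p ∈ closedSimplex N, η p.1 p.2 ≤ η j k) : η (j - 1) k = η j k := by
  obtain ⟨hleft, hup, hoff⟩ := h.neighbours_mem_closedSimplex
  have hl := hmax _ hleft
  have hu := hmax _ hup
  unfold Lrw at hL
  split_ifs at hL with hd
  · obtain ⟨hright, hdown⟩ := hoff hd
    linarith [hmax _ hright, hmax _ hdown]
  · linarith

lemma le_zero_of_Lrw_eq_zero (hb : ∀ j k, inBdry N j k → η j k = 0)
    (hh : ∀ j k, inDhat N j k → Lrw η j k = 0) {p : ℤ × ℤ} (hp : p ∈ closedSimplex N) :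
    η p.1 p.2 ≤ 0 := by
  obtain ⟨m, hm, hmax⟩ := (closedSimplex N).exists_max_image (fun q => η q.1 q.2) ⟨p, hp⟩
  set argmax := (closedSimplex N).filter fun q => η q.1 q.2 = η m.1 m.2
  obtain ⟨q, hq, hqmin⟩ := argmax.exists_min_image Prod.fst ⟨m, mem_filter.2 ⟨hm, rfl⟩⟩
  obtain ⟨hqS, hqm⟩ := mem_filter.1 hq
  rcases mem_closedSimplex.1 hqS with hin | hbd
  · exfalso
    have hleft : η (q.1 - 1) q.2 = η q.1 q.2 :=
      left_eq_of_Lrw_eq_zero_of_le hin (hh _ _ hin) (hqm ▸ hmax)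
    have := hqmin (q.1 - 1, q.2)
      (mem_filter.2 ⟨hin.neighbours_mem_closedSimplex.1, hleft.trans hqm⟩)
    omega
  · linarith [hmax p hp, hb _ _ hbd]

lemma eq_of_Lrw_eq {φ ψ : ℤ → ℤ → ℝ} (hb : ∀ j k, inBdry N j k → ψ j k = φ j k)
    (hh : ∀ j k, inDhat N j k → Lrw ψ j k = Lrw φ j k) {j k : ℤ}
    (hjk : inDhat N j k ∨ inBdry N j k) : ψ j k = φ j k := by
  have hp : (j, k) ∈ closedSimplex N := mem_closedSimplex.2 hjk
  have hle := le_zero_of_Lrw_eq_zero (η := fun a b => ψ a b - φ a b)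
    (fun a b h => sub_eq_zero.2 (hb a b h))
    (fun a b h => by rw [Lrw_sub, hh a b h, sub_self]) hp
  have hge := le_zero_of_Lrw_eq_zero (η := fun a b => φ a b - ψ a b)
    (fun a b h => sub_eq_zero.2 (hb a b h).symm)
    (fun a b h => by rw [Lrw_sub, hh a b h, sub_self]) hp
  simp only at hle hge
  linarith

end MaximumPrinciple

section Solution

noncomputable def quasiSolution (N : ℕ) (c : ℝ) (j k : ℤ) : ℝ :=
  -(c^2) * ((j : ℝ) - 1) * ((N : ℝ) - (k : ℝ)) / ((N : ℝ) - 2)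

variable {N : ℕ} {c : ℝ} {j k : ℤ}

lemma quasiSolution_eq_zero_of_inBdry (h : inBdry N j k) : quasiSolution N c j k = 0 := by
  unfold quasiSolution
  rcases h with ⟨rfl, -⟩ | ⟨rfl, -⟩ <;> simp

lemma Lrw_quasiSolution_add (h : inDhat N j k) :
    Lrw (quasiSolution N c) j k + (if k = j + 1 then -(c^2) else 0) = 0 := by
  have hN : (N : ℝ) - 2 ≠ 0 := by
    -- `D̂_N` is empty unless `4 ≤ N`
    have : (4 : ℤ) ≤ N := by unfold inDhat at h; omega
    have : (4 : ℝ) ≤ N := by exact_mod_cast this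
    linarith
  have hsol :
      quasiSolution N c = fun (a b : ℤ) => -(c^2) / (N - 2) * (((a : ℝ) - 1) * (N - b)) :=
    funext₂ fun (a b : ℤ) => by unfold quasiSolution; ring
  rw [hsol, Lrw_const_mul, Lrw_mul_sub]
  unfold inDhat at h
  split_ifs with hd hdiag hdiag
  · omega
  · simp
  · have hk : (k : ℝ) - j = 1 := by rw [hdiag]; push_cast; ring
    rw [hk]
    field_simp
    ring
  · omega

end Solution

theorem stmt19_general (N : ℕ) (c : ℝ) (φ : ℤ → ℤ → ℝ)
    (hφ : ∀ j k : ℤ,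
      φ j k = -(c^2) * ((j : ℝ) - 1) * ((N : ℝ) - (k : ℝ)) / ((N : ℝ) - 2)) :
    ((∀ j k : ℤ, inBdry N j k → φ j k = 0) ∧
      (∀ j k : ℤ, inDhat N j k →
        Lrw φ j k + (if k = j + 1 then -(c^2) else 0) = 0)) ∧
    (∀ ψ : ℤ → ℤ → ℝ,
      (∀ j k : ℤ, inBdry N j k → ψ j k = 0) →
      (∀ j k : ℤ, inDhat N j k →
        Lrw ψ j k + (if k = j + 1 then -(c^2) else 0) = 0) →
      ∀ j k : ℤ, inDhat N j k ∨ inBdry N j k → ψ j k = φ j k) := by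
  obtain rfl : φ = quasiSolution N c := funext₂ hφ
  refine ⟨⟨fun j k => quasiSolution_eq_zero_of_inBdry,
    fun j k => Lrw_quasiSolution_add⟩, fun ψ hb hh j k => eq_of_Lrw_eq ?_ ?_⟩
  · intro a b h
    rw [hb a b h, quasiSolution_eq_zero_of_inBdry h]
  · intro a b h
    linarith [hh a b h, Lrw_quasiSolution_add (c := c) h]

/-- `φ(j,k) = −c² (j−1)(N−k)/(N−2)` is the unique function
vanishing on `∂D̂_N` and satisfying `(ℒ_N φ)(j,k) + F(j,k) = 0` on `D̂_N`,
where `F(j,k) = −c² 𝟙{k = j+1}`. -/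
theorem stmt19 (N : ℕ) (hN : 4 ≤ N) (c : ℝ) (φ : ℤ → ℤ → ℝ)
    (hφ : ∀ j k : ℤ,
      φ j k = -(c^2) * ((j : ℝ) - 1) * ((N : ℝ) - (k : ℝ)) / ((N : ℝ) - 2)) :
    ((∀ j k : ℤ, inBdry N j k → φ j k = 0) ∧
      (∀ j k : ℤ, inDhat N j k →
        Lrw φ j k + (if k = j + 1 then -(c^2) else 0) = 0)) ∧
    (∀ ψ : ℤ → ℤ → ℝ,
      (∀ j k : ℤ, inBdry N j k → ψ j k = 0) →
      (∀ j k : ℤ, inDhat N j k →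
        Lrw ψ j k + (if k = j + 1 then -(c^2) else 0) = 0) →
      ∀ j k : ℤ, inDhat N j k ∨ inBdry N j k → ψ j k = φ j k) :=
  stmt19_general N c φ hφ
end
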